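/- arXiv:2210.15554 — 7 statements merged into one kernel-verified Lean document; each statement's English description precedes it below -/
import Mathlib

section
/- Let X be a Polish space with compatible metric d, and let (M_n) be a sequence of partitions of X, each consisting of at most countably many Borel sets, with mesh ||M_n|| := sup_{M ∈ M_n} diam(M) tending to 0. If μ_n, μ are Borel probability measures on X such that μ_n(M) = μ(M) for every M ∈ M_n, then μ_n converges weakly to μ. -/
open MeasureTheory Filter

/-- Let `X` be a Polish (complete separable metric) space and `(𝓜 n)`
a sequence of partitions of `X` into at most countably many Borel sets whose meshes
tend to `0`.  If `μₙ, μ` are Borel probability measures with `μₙ M = μ M` for every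
`M ∈ 𝓜 n`, then `μₙ → μ` weakly. -/
theorem tendsto_of_agree_on_partitions
    {X : Type*} [MetricSpace X] [CompleteSpace X] [SecondCountableTopology X]
    [MeasurableSpace X] [BorelSpace X]
    (𝓜 : ℕ → Set (Set X))
    (hcount : ∀ n, (𝓜 n).Countable)
    (hmeas : ∀ n, ∀ M ∈ 𝓜 n, MeasurableSet M)
    (hcover : ∀ n, ⋃₀ 𝓜 n = Set.univ)
    (hdisj : ∀ n, (𝓜 n).PairwiseDisjoint id)
    (hmesh : Tendsto (fun n => ⨆ M ∈ 𝓜 n, EMetric.diam M) atTop (nhds 0))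
    (μn : ℕ → ProbabilityMeasure X) (μ : ProbabilityMeasure X)
    (hagree : ∀ n, ∀ M ∈ 𝓜 n, (μn n : Measure X) M = (μ : Measure X) M) :
    Tendsto μn atTop (nhds μ) := by
  -- Key step: for every closed set `F`, `limsup μₙ F ≤ μ F` (in ℝ≥0∞).
  have key : ∀ F : Set X, IsClosed F →
      atTop.limsup (fun n => (μn n : Measure X) F) ≤ (μ : Measure X) F := by
    intro F F_closed
    refine ENNReal.le_of_forall_pos_le_add fun ε εpos _ => ?_
    -- choose δ > 0 with μ (thickening δ F) ≤ μ F + ε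
    have hthick : Tendsto (fun r => (μ : Measure X) (Metric.thickening r F))
        (nhdsWithin 0 (Set.Ioi 0)) (nhds ((μ : Measure X) F)) := by
      have := tendsto_measure_thickening (μ := (μ : Measure X)) (s := F)
        ⟨1, one_pos, measure_ne_top _ _⟩
      rwa [F_closed.closure_eq] at this
    have hlt : (μ : Measure X) F < (μ : Measure X) F + ε := by
      exact ENNReal.lt_add_right (measure_ne_top _ _) (by exact_mod_cast εpos.ne')
    obtain ⟨δ, δpos, hδ⟩ : ∃ δ > 0,
        (μ : Measure X) (Metric.thickening δ F) ≤ (μ : Measure X) F + ε := by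
      have := hthick.eventually (Filter.Tendsto.eventually_lt_const hlt tendsto_id)
      rcases (eventually_nhdsWithin_iff.mp this).exists_mem with ⟨s, hs, h⟩
      rcases Metric.mem_nhds_iff.mp hs with ⟨r, rpos, hr⟩
      refine ⟨r / 2, by positivity, le_of_lt ?_⟩
      exact h _ (hr (by rw [Metric.mem_ball, dist_zero_right, Real.norm_eq_abs, abs_of_pos (half_pos rpos)]; exact half_lt_self rpos)) (half_pos rpos)
    -- eventually the mesh is `< ENNReal.ofReal δ`
    have hev : ∀ᶠ n in atTop, (⨆ M ∈ 𝓜 n, EMetric.diam M) < ENNReal.ofReal δ := by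
      exact hmesh.eventually_lt_const (by simpa using δpos)
    refine Filter.limsup_le_of_le (by isBoundedDefault) ?_
    filter_upwards [hev] with n hn
    -- union of pieces meeting F
    set S : Set (Set X) := {M ∈ 𝓜 n | (M ∩ F).Nonempty} with hS
    have hSsub : S ⊆ 𝓜 n := fun M hM => hM.1
    have hFsub : F ⊆ ⋃₀ S := by
      intro x hx
      have : x ∈ ⋃₀ 𝓜 n := (hcover n).symm ▸ Set.mem_univ x
      rcases this with ⟨M, hM, hxM⟩
      exact ⟨M, ⟨hM, ⟨x, hxM, hx⟩⟩, hxM⟩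
    have hSthick : ⋃₀ S ⊆ Metric.thickening δ F := by
      rintro x ⟨M, ⟨hM, y, hyM, hyF⟩, hxM⟩
      rw [Metric.mem_thickening_iff_infEdist_lt]
      calc EMetric.infEdist x F ≤ edist x y := EMetric.infEdist_le_edist_of_mem hyF
        _ ≤ EMetric.diam M := EMetric.edist_le_diam_of_mem hxM hyM
        _ ≤ ⨆ M ∈ 𝓜 n, EMetric.diam M := le_biSup _ hM
        _ < ENNReal.ofReal δ := hn
    have hmeasS : (μn n : Measure X) (⋃₀ S) = (μ : Measure X) (⋃₀ S) := by
      have hpd : S.Pairwise Disjoint := fun a ha b hb hab => (hdisj n) (hSsub ha) (hSsub hb) hab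
      rw [measure_sUnion ((hcount n).mono hSsub) hpd (fun s hs => hmeas n s (hSsub hs)),
          measure_sUnion ((hcount n).mono hSsub) hpd (fun s hs => hmeas n s (hSsub hs))]
      exact tsum_congr fun M => hagree n M (hSsub M.2)
    calc (μn n : Measure X) F ≤ (μn n : Measure X) (⋃₀ S) := measure_mono hFsub
      _ = (μ : Measure X) (⋃₀ S) := hmeasS
      _ ≤ (μ : Measure X) (Metric.thickening δ F) := measure_mono hSthick
      _ ≤ (μ : Measure X) F + ε := hδ
  -- Convert to the liminf condition for open sets and apply portmanteau.
  have hopen : ∀ G : Set X, IsOpen G →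
      (μ : Measure X) G ≤ atTop.liminf fun n => (μn n : Measure X) G :=
    (limsup_measure_closed_le_iff_liminf_measure_open_ge
      (μ := (μ : Measure X)) (μs := fun n => (μn n : Measure X))).mp key
  apply tendsto_of_forall_isOpen_le_liminf
  intro G G_open
  have aux : (ENNReal.ofNNReal (liminf (fun i => μn i G) atTop)) =
      liminf (ENNReal.ofNNReal ∘ fun i => μn i G) atTop := by
    refine Monotone.map_liminf_of_continuousAt (F := atTop) ENNReal.coe_mono (fun i => μn i G)
      ENNReal.continuous_coe.continuousAt
      (IsBoundedUnder.isCoboundedUnder_ge ⟨1, by simp⟩) ⟨0, by simp⟩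
  rw [← ENNReal.coe_le_coe, aux]
  simpa only [Function.comp_def, ProbabilityMeasure.ennreal_coeFn_eq_coeFn_toMeasure]
    using hopen G G_open
end

section
/- Let F : X × [0,1] → [0,1] be Borel such that for each x ∈ X the map t ↦ F(x,t) is monotone. Then the set N := {(x,y) ∈ X × [0,1] : ∃ t₁ ≠ t₂ with y = F(x,t₁) = F(x,t₂)} is Borel, and for every x ∈ X the section N_x = {y : (x,y) ∈ N} is at most countable. -/
open MeasureTheory

/-- If a monotone map takes the same value at `t₁ < t₂`, it is constant on `[t₁, t₂]`,
and since a countable dense set meets `(t₁, t₂)` in at least two points, the common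
value is attained at two distinct points of the dense set. -/
lemma exists_dense_pair_of_monotone_eq {f : unitInterval → unitInterval}
    (hf : Monotone f) {D : Set unitInterval} (hD : Dense D)
    {t₁ t₂ : unitInterval} (hlt : t₁ < t₂) (heq : f t₁ = f t₂) :
    ∃ d₁ ∈ D, ∃ d₂ ∈ D, d₁ ≠ d₂ ∧ f d₁ = f t₁ ∧ f d₂ = f t₁ := by
  have hconst : ∀ s ∈ Set.Icc t₁ t₂, f s = f t₁ := by
    intro s hs
    exact le_antisymm (heq ▸ hf hs.2) (hf hs.1)
  obtain ⟨d₁, hd₁D, hd₁o⟩ := hD.exists_mem_open isOpen_Ioo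
    (Set.nonempty_Ioo.2 hlt)
  obtain ⟨d₂, hd₂D, hd₂o⟩ := hD.exists_mem_open isOpen_Ioo
    (Set.nonempty_Ioo.2 hd₁o.1)
  refine ⟨d₁, hd₁D, d₂, hd₂D, (ne_of_gt hd₂o.2), ?_, ?_⟩
  · exact hconst d₁ ⟨hd₁o.1.le, hd₁o.2.le⟩
  · exact hconst d₂ ⟨hd₂o.1.le, (hd₂o.2.trans hd₁o.2).le⟩

lemma exists_dense_pair_of_monotone_eq' {f : unitInterval → unitInterval}
    (hf : Monotone f) {D : Set unitInterval} (hD : Dense D)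
    {t₁ t₂ : unitInterval} (hne : t₁ ≠ t₂) (heq : f t₁ = f t₂) :
    ∃ d₁ ∈ D, ∃ d₂ ∈ D, d₁ ≠ d₂ ∧ f d₁ = f t₁ ∧ f d₂ = f t₁ := by
  rcases hne.lt_or_gt with hlt | hlt
  · exact exists_dense_pair_of_monotone_eq hf hD hlt heq
  · obtain ⟨d₁, h₁, d₂, h₂, h₃, h₄, h₅⟩ :=
      exists_dense_pair_of_monotone_eq hf hD hlt heq.symm
    exact ⟨d₁, h₁, d₂, h₂, h₃, h₄.trans heq.symm, h₅.trans heq.symm⟩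

/-- Let `F : X × [0,1] → [0,1]` be Borel such that for each `x ∈ X`
the map `t ↦ F (x, t)` is monotone.  Then the set
`N := {(x,y) : ∃ t₁ ≠ t₂, y = F (x,t₁) = F (x,t₂)}` is Borel and every section
`N_x` is at most countable. -/
theorem borel_section_countable_of_monotone
    {X : Type*} [MeasurableSpace X] [StandardBorelSpace X]
    (F : X × unitInterval → unitInterval)
    (hF : Measurable F)
    (hmono : ∀ x : X, Monotone (fun t => F (x, t))) :
    MeasurableSet {p : X × unitInterval |
        ∃ t₁ t₂ : unitInterval, t₁ ≠ t₂ ∧ p.2 = F (p.1, t₁) ∧ F (p.1, t₁) = F (p.1, t₂)} ∧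
    ∀ x : X, Set.Countable {y : unitInterval |
        ∃ t₁ t₂ : unitInterval, t₁ ≠ t₂ ∧ y = F (x, t₁) ∧ F (x, t₁) = F (x, t₂)} := by
  obtain ⟨D, hDc, hDd⟩ := TopologicalSpace.exists_countable_dense unitInterval
  -- The key reduction: witnesses can be taken from the countable dense set `D`.
  have key : ∀ (x : X) (y : unitInterval),
      (∃ t₁ t₂ : unitInterval, t₁ ≠ t₂ ∧ y = F (x, t₁) ∧ F (x, t₁) = F (x, t₂)) ↔
      (∃ d₁ ∈ D, ∃ d₂ ∈ D, d₁ ≠ d₂ ∧ y = F (x, d₁) ∧ F (x, d₁) = F (x, d₂)) := by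
    intro x y
    constructor
    · rintro ⟨t₁, t₂, hne, hy, heq⟩
      obtain ⟨d₁, h₁, d₂, h₂, h₃, h₄, h₅⟩ :=
        exists_dense_pair_of_monotone_eq' (hmono x) hDd hne heq
      exact ⟨d₁, h₁, d₂, h₂, h₃, hy.trans h₄.symm, h₄.trans h₅.symm⟩
    · rintro ⟨d₁, _, d₂, _, h₃, h₄, h₅⟩
      exact ⟨d₁, d₂, h₃, h₄, h₅⟩
  constructor
  · -- Measurability: rewrite as a countable union over pairs from `D`.
    have hset : {p : X × unitInterval |
        ∃ t₁ t₂ : unitInterval, t₁ ≠ t₂ ∧ p.2 = F (p.1, t₁) ∧ F (p.1, t₁) = F (p.1, t₂)} =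
        ⋃ d₁ ∈ D, ⋃ d₂ ∈ D,
          {p : X × unitInterval | d₁ ≠ d₂ ∧ p.2 = F (p.1, d₁) ∧ F (p.1, d₁) = F (p.1, d₂)} := by
      ext p
      simp only [Set.mem_setOf_eq, Set.mem_iUnion, exists_prop]
      exact key p.1 p.2
    rw [hset]
    refine MeasurableSet.biUnion hDc fun d₁ _ => MeasurableSet.biUnion hDc fun d₂ _ => ?_
    by_cases hne : d₁ = d₂
    · convert MeasurableSet.empty (α := X × unitInterval)
      ext p; simp [hne]
    · have h1 : MeasurableSet {p : X × unitInterval | p.2 = F (p.1, d₁)} :=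
        (measurable_snd).stronglyMeasurable.measurableSet_eq_fun
          (hF.comp (measurable_fst.prodMk measurable_const)).stronglyMeasurable
      have h2 : MeasurableSet {p : X × unitInterval | F (p.1, d₁) = F (p.1, d₂)} :=
        (hF.comp (measurable_fst.prodMk measurable_const)).stronglyMeasurable.measurableSet_eq_fun
          (hF.comp (measurable_fst.prodMk measurable_const)).stronglyMeasurable
      have : {p : X × unitInterval | d₁ ≠ d₂ ∧ p.2 = F (p.1, d₁) ∧ F (p.1, d₁) = F (p.1, d₂)} =
          {p : X × unitInterval | p.2 = F (p.1, d₁)} ∩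
          {p : X × unitInterval | F (p.1, d₁) = F (p.1, d₂)} := by
        ext p; simp [hne]
      rw [this]
      exact h1.inter h2
  · -- Countability: every such `y` is a value of `F (x, ·)` at a point of `D`.
    intro x
    have hsub : {y : unitInterval |
        ∃ t₁ t₂ : unitInterval, t₁ ≠ t₂ ∧ y = F (x, t₁) ∧ F (x, t₁) = F (x, t₂)} ⊆
        (fun d => F (x, d)) '' D := by
      intro y hy
      obtain ⟨d₁, h₁, _, _, _, h₄, _⟩ := (key x y).1 hy
      exact ⟨d₁, h₁, h₄.symm⟩
    exact (hDc.image _).mono hsub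
end

section
/- Let X, Y, Z be standard Borel spaces, μ a kernel from Z to X and ν a kernel from Z to Y such that μ^z and ν^z are atomless probability measures for all z ∈ Z. Then there exists a jointly Borel function G : Z × X → Y such that for each z ∈ Z the map G(z,·) : X → Y is a Borel isomorphism with G(z,·)_*μ^z = ν^z. -/
/-!
Transport `X` and `Y` to `ℝ` by Borel isomorphisms. For an atomless law `μ` on `ℝ`, the cdf `F`
pushes `μ` to the uniform law on `(0, 1)`, and the quantile function `Q` of another atomless law
`ν` is injective on `(0, 1)` and pushes the uniform law to `ν`. So `Q ∘ F` transports `μ` to `ν`;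
it becomes injective once the `μ`-null set where `F` fails to be injective is sent injectively
into a Lebesgue-null Cantor set, which `F` almost surely avoids. All of this is measurable in
the parameter `z`. The Schröder–Bernstein construction, applied to the resulting injections
`Z × X → Z × Y` and `Z × Y → Z × X`, has a Borel fixed-point set obtained by countable iteration
and acts fiber by fiber; since both injections transport the measures, so does the bijection
glued from them.
-/

open MeasureTheory ProbabilityTheory Set Function Filter Topology

open scoped ENNReal in
theorem volume_cantorSet : volume cantorSet = 0 := by
  have hcontract (x : ℝ) (s : Set ℝ) :
      volume (AffineMap.homothety x (1 / 3 : ℝ) '' s) = 3⁻¹ * volume s := by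
    rw [Measure.addHaar_image_homothety, Module.finrank_self, pow_one,
      abs_of_pos (by norm_num), one_div, ENNReal.ofReal_inv_of_pos (by norm_num),
      ENNReal.ofReal_ofNat]
  have h1 : (· / 3) = AffineMap.homothety (0 : ℝ) (1 / 3 : ℝ) := by
    ext x
    simp only [AffineMap.homothety_apply, vsub_eq_sub, smul_eq_mul, vadd_eq_add]
    ring
  have h2 : (fun x ↦ (2 + x) / 3) = AffineMap.homothety (1 : ℝ) (1 / 3 : ℝ) := by
    ext x
    simp only [AffineMap.homothety_apply, vsub_eq_sub, smul_eq_mul, vadd_eq_add]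
    ring
  have hpre (n : ℕ) : volume (preCantorSet n) ≤ (2 * 3⁻¹ : ℝ≥0∞) ^ n := by
    induction n with
    | zero => simp
    | succ n ih =>
      calc volume (preCantorSet (n + 1))
          ≤ 3⁻¹ * volume (preCantorSet n) + 3⁻¹ * volume (preCantorSet n) := by
            rw [preCantorSet_succ, h1, h2]
            exact (measure_union_le _ _).trans_eq (by rw [hcontract, hcontract])
        _ = 2 * 3⁻¹ * volume (preCantorSet n) := by ring
        _ ≤ (2 * 3⁻¹ : ℝ≥0∞) ^ (n + 1) := by rw [pow_succ']; gcongr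
  have hlim : Tendsto (fun n ↦ (2 * 3⁻¹ : ℝ≥0∞) ^ n) atTop (𝓝 0) :=
    ENNReal.tendsto_pow_atTop_nhds_zero_of_lt_one <| by
      rw [← div_eq_mul_inv, ENNReal.div_lt_iff (by norm_num) (by norm_num)]; norm_num
  exact le_antisymm (ge_of_tendsto' hlim fun n ↦ (measure_mono (iInter_subset _ n)).trans (hpre n))
    zero_le

theorem exists_measurableEmbedding_null_range :
    ∃ φ : ℝ → ℝ, MeasurableEmbedding φ ∧ range φ ⊆ Ioo 0 1 ∧ volume (range φ) = 0 := by
  obtain ⟨em, hem, hemi⟩ := MeasurableSpace.measurable_injection_nat_bool_of_countablySeparated ℝ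
  set h := AffineMap.homothety (1 / 2 : ℝ) (1 / 3 : ℝ)
  let φ : ℝ → ℝ := fun x ↦ h (cantorSetHomeomorphNatToBool.symm (em x))
  have hφ : Measurable φ := by fun_prop
  have hφi : Injective φ := by
    have hh : Injective h := fun a b hab ↦ by
      simpa [h, AffineMap.homothety_apply] using hab
    exact hh.comp (Subtype.val_injective.comp
      (cantorSetHomeomorphNatToBool.symm.injective.comp hemi))
  have hrange : range φ ⊆ h '' cantorSet := by
    rintro _ ⟨x, rfl⟩
    exact mem_image_of_mem h (cantorSetHomeomorphNatToBool.symm (em x)).2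
  refine ⟨φ, hφ.measurableEmbedding hφi, hrange.trans ?_, measure_mono_null hrange ?_⟩
  · rintro _ ⟨c, hc, rfl⟩
    have := cantorSet_subset_unitInterval hc
    simp only [h, AffineMap.homothety_apply, vsub_eq_sub, vadd_eq_add, smul_eq_mul, mem_Ioo]
    constructor <;> linarith [this.1, this.2]
  · rw [Measure.addHaar_image_homothety, volume_cantorSet, mul_zero]

theorem volume_restrict_Ioo_zero_one_Iic (t : ℝ) :
    volume.restrict (Ioo 0 1) (Iic t) = ENNReal.ofReal (min 1 t) := by
  rw [Measure.restrict_apply measurableSet_Iic, inter_comm,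
    measure_congr (Ioo_ae_eq_Ioc.inter (ae_eq_refl (Iic t))), Ioc_inter_Iic, Real.volume_Ioc,
    sub_zero]

namespace ProbabilityTheory

section Cdf

variable (μ : Measure ℝ) [IsProbabilityMeasure μ] [NullSingletonClass μ]

theorem continuous_cdf : Continuous (cdf μ) := by
  refine continuous_iff_continuousAt.2 fun a ↦ continuousAt_iff_continuous_left_right.2
    ⟨?_, (cdf μ).right_continuous' a⟩
  have h := (cdf μ).measure_singleton a
  rw [measure_cdf, measure_singleton, eq_comm, ENNReal.ofReal_eq_zero, sub_nonpos] at h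
  have hleft : leftLim (cdf μ) a = cdf μ a := le_antisymm ((monotone_cdf μ).leftLim_le le_rfl) h
  exact continuousWithinAt_Iio_iff_Iic.1
    ((Monotone.continuousWithinAt_Iio_iff_leftLim_eq (monotone_cdf μ)).2 hleft)

/-- The sublevel set `{cdf μ ≤ t}` is a closed half-line `Iic a` with `cdf μ a = t`. -/
theorem measure_cdf_le_of_mem_Ico {t : ℝ} (ht : t ∈ Ico 0 1) :
    μ (cdf μ ⁻¹' Iic t) = ENNReal.ofReal t := by
  set S := cdf μ ⁻¹' Iic t
  obtain ⟨b, hb⟩ := eventually_atTop.1 ((tendsto_cdf_atTop μ).eventually (lt_mem_nhds ht.2))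
  have hbdd : BddAbove S := ⟨b, fun x hx ↦ le_of_not_gt fun hbx ↦ (hb x hbx.le).not_ge hx⟩
  rcases S.eq_empty_or_nonempty with hS | hS
  · have ht0 : t ≤ 0 := ge_of_tendsto (tendsto_cdf_atBot μ) <| .of_forall fun x ↦
      le_of_lt <| not_le.1 fun hx ↦ hS.subset hx
    rw [hS, le_antisymm ht0 ht.1]
    simp
  set a := sSup S
  have haS : a ∈ S := (isClosed_Iic.preimage (continuous_cdf μ)).csSup_mem hS hbdd
  have hSa : S = Iic a :=
    (Subset.antisymm (fun x hx ↦ le_csSup hbdd hx) fun x hx ↦ (monotone_cdf μ hx).trans haS)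
  have hlim : Tendsto (cdf μ) (𝓝[>] a) (𝓝 (cdf μ a)) :=
    (continuous_cdf μ).continuousWithinAt.tendsto
  have hta : t ≤ cdf μ a := ge_of_tendsto hlim <| eventually_nhdsWithin_of_forall fun x hx ↦
    le_of_lt <| not_le.1 fun h ↦ (not_le.2 hx) (le_csSup hbdd h)
  rw [hSa, ← ofReal_cdf, le_antisymm haS hta]

theorem measure_cdf_le (t : ℝ) : μ (cdf μ ⁻¹' Iic t) = ENNReal.ofReal (min 1 t) := by
  rcases lt_or_ge t 0 with ht | ht
  · have : cdf μ ⁻¹' Iic t = ∅ :=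
      eq_empty_of_forall_notMem fun x hx ↦ (ht.trans_le (cdf_nonneg μ x)).not_ge hx
    rw [this, measure_empty, ENNReal.ofReal_of_nonpos (min_le_of_right_le ht.le)]
  rcases lt_or_ge t 1 with ht1 | ht1
  · rw [measure_cdf_le_of_mem_Ico μ ⟨ht, ht1⟩, min_eq_right ht1.le]
  · have : cdf μ ⁻¹' Iic t = univ := eq_univ_of_forall fun x ↦ (cdf_le_one μ x).trans ht1
    rw [this, measure_univ, min_eq_left ht1, ENNReal.ofReal_one]

theorem map_cdf : μ.map (cdf μ) = volume.restrict (Ioo 0 1) := by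
  refine Measure.ext_of_Iic _ _ fun t ↦ ?_
  rw [Measure.map_apply (continuous_cdf μ).measurable measurableSet_Iic, measure_cdf_le μ,
    volume_restrict_Ioo_zero_one_Iic]

end Cdf

section Quantile

/-- Set to `0` off `Ioo 0 1`, where the infimum would be a junk value. -/
noncomputable def quantile (μ : Measure ℝ) (p : ℝ) : ℝ :=
  if p ∈ Ioo 0 1 then sInf {x | p ≤ cdf μ x} else 0

variable (μ : Measure ℝ) {p : ℝ}

theorem bddBelow_setOf_le_cdf (hp : 0 < p) : BddBelow {x | p ≤ cdf μ x} := by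
  obtain ⟨b, hb⟩ := eventually_atBot.1 ((tendsto_cdf_atBot μ).eventually (gt_mem_nhds hp))
  exact ⟨b, fun x hx ↦ le_of_not_gt fun hxb ↦ (hb x hxb.le).not_ge hx⟩

variable [IsProbabilityMeasure μ] [NullSingletonClass μ]

theorem cdf_quantile (hp : p ∈ Ioo 0 1) : cdf μ (quantile μ p) = p := by
  set S := {x | p ≤ cdf μ x}
  have hne : S.Nonempty := ((tendsto_cdf_atTop μ).eventually (eventually_ge_nhds hp.2)).exists
  have hbdd := bddBelow_setOf_le_cdf μ hp.1
  have hq : sInf S ∈ S := (isClosed_Ici.preimage (continuous_cdf μ)).csInf_mem hne hbdd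
  have hlim : Tendsto (cdf μ) (𝓝[<] sInf S) (𝓝 (cdf μ (sInf S))) :=
    (continuous_cdf μ).continuousWithinAt.tendsto
  have hle : cdf μ (sInf S) ≤ p := le_of_tendsto hlim <| eventually_nhdsWithin_of_forall
    fun x hx ↦ le_of_lt <| not_le.1 fun h ↦ (not_le.2 hx) (csInf_le hbdd h)
  rw [quantile, if_pos hp]
  exact le_antisymm hle hq

theorem quantile_le_iff (hp : p ∈ Ioo 0 1) {c : ℝ} : quantile μ p ≤ c ↔ p ≤ cdf μ c := by
  refine ⟨fun h ↦ cdf_quantile μ hp ▸ monotone_cdf μ h, fun h ↦ ?_⟩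
  rw [quantile, if_pos hp]
  exact csInf_le (bddBelow_setOf_le_cdf μ hp.1) h

theorem injOn_quantile : InjOn (quantile μ) (Ioo 0 1) :=
  fun p hp q hq h ↦ by rw [← cdf_quantile μ hp, h, cdf_quantile μ hq]

theorem _root_.Measurable.quantile {W : Type*} [MeasurableSpace W] {κ : W → Measure ℝ}
    [∀ w, IsProbabilityMeasure (κ w)] [∀ w, NullSingletonClass (κ w)] {p : W → ℝ}
    (hκ : ∀ c, Measurable fun w ↦ cdf (κ w) c) (hp : Measurable p) :
    Measurable fun w ↦ ProbabilityTheory.quantile (κ w) (p w) := by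
  refine measurable_of_Iic fun c ↦ ?_
  have : (fun w ↦ ProbabilityTheory.quantile (κ w) (p w)) ⁻¹' Iic c =
      {w | p w ∈ Ioo 0 1 ∧ p w ≤ cdf (κ w) c} ∪ {w | p w ∉ Ioo 0 1 ∧ 0 ≤ c} := by
    ext w
    by_cases hw : p w ∈ Ioo 0 1
    · simp only [mem_preimage, mem_Iic, mem_union, mem_ofPred_eq, hw, true_and,
        not_true_eq_false, false_and, or_false, quantile_le_iff _ hw]
    · simp only [mem_preimage, mem_Iic, mem_union, mem_ofPred_eq, hw, false_and, false_or,
        not_false_eq_true, true_and, ProbabilityTheory.quantile, if_false]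
  rw [this]
  exact ((hp measurableSet_Ioo).inter (measurableSet_le hp (hκ c))).union
    ((hp measurableSet_Ioo).compl.inter (.const _))

theorem measurable_quantile : Measurable (quantile μ) :=
  Measurable.quantile (κ := fun _ ↦ μ) (fun _ ↦ measurable_const) measurable_id

theorem map_quantile : (volume.restrict (Ioo 0 1)).map (quantile μ) = μ := by
  refine Measure.ext_of_Iic _ _ fun c ↦ ?_
  have : quantile μ ⁻¹' Iic c ∩ Ioo 0 1 = Iic (cdf μ c) ∩ Ioo 0 1 := by
    ext p
    simp only [mem_inter_iff, mem_preimage, mem_Iic, and_congr_left_iff]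
    exact fun hp ↦ quantile_le_iff μ hp
  rw [Measure.map_apply (measurable_quantile μ) measurableSet_Iic,
    Measure.restrict_apply' measurableSet_Ioo, this, ← Measure.restrict_apply measurableSet_Iic,
    volume_restrict_Ioo_zero_one_Iic, min_eq_right (cdf_le_one μ c), ofReal_cdf]

end Quantile

def cdfInjSet (μ : Measure ℝ) (C : Set ℝ) : Set ℝ :=
  {x | cdf μ x ∈ Ioo 0 1 \ C ∧ ∀ r : ℚ, (r : ℝ) < x → cdf μ r < cdf μ x}

theorem injOn_cdf_cdfInjSet (μ : Measure ℝ) (C : Set ℝ) : InjOn (cdf μ) (cdfInjSet μ C) := by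
  intro x hx y hy hxy
  by_contra hne
  wlog hlt : x < y generalizing x y
  · exact this hy hx hxy.symm (Ne.symm hne) (lt_of_le_of_ne (not_lt.1 hlt) (Ne.symm hne))
  obtain ⟨r, hxr, hry⟩ := exists_rat_btwn hlt
  exact (hy.2 r hry).not_ge (hxy ▸ monotone_cdf μ hxr.le)

theorem ae_mem_cdfInjSet (μ : Measure ℝ) [IsProbabilityMeasure μ] [NullSingletonClass μ]
    {C : Set ℝ} (hC : volume C = 0) : ∀ᵐ x ∂μ, x ∈ cdfInjSet μ C := by
  have hIoo : ∀ᵐ x ∂μ, cdf μ x ∈ Ioo 0 1 \ C := by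
    refine ae_of_ae_map (continuous_cdf μ).aemeasurable ?_
    rw [map_cdf]
    exact (ae_restrict_mem measurableSet_Ioo).and
      (ae_restrict_of_ae (measure_eq_zero_iff_ae_notMem.1 hC))
  have hstrict : ∀ᵐ x ∂μ, ∀ r : ℚ, (r : ℝ) < x → cdf μ r < cdf μ x := by
    refine ae_all_iff.2 fun r ↦ ae_iff.2 <|
      measure_mono_null (t := cdf μ ⁻¹' Iic (cdf μ r) \ Iic (r : ℝ)) (fun x hx ↦ ?_) ?_
    · push Not at hx
      exact ⟨hx.2, not_le.2 hx.1⟩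
    · have hsub : Iic (r : ℝ) ⊆ cdf μ ⁻¹' Iic (cdf μ r) := fun x hx ↦ monotone_cdf μ hx
      rw [measure_sdiff hsub measurableSet_Iic.nullMeasurableSet (measure_ne_top _ _),
        measure_cdf_le, min_eq_right (cdf_le_one μ r), ofReal_cdf, tsub_self]
  exact hIoo.and hstrict

variable {Z : Type*} [MeasurableSpace Z]

theorem Kernel.measurable_cdf (κ : Kernel Z ℝ) [IsMarkovKernel κ] :
    Measurable fun q : Z × ℝ ↦ cdf (κ q.1) q.2 := by
  simp_rw [cdf_eq_real]
  exact (Kernel.measurable_kernel_prodMk_left (κ := κ.comap Prod.fst measurable_fst)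
    (measurableSet_le measurable_snd measurable_fst.snd)).ennreal_toReal

theorem exists_injective_map_eq_volume_Ioo (μ : Kernel Z ℝ) [IsMarkovKernel μ]
    (hμ : ∀ z x, μ z {x} = 0) :
    ∃ U : Z × ℝ → ℝ, Measurable U ∧ ∀ z, Injective (fun x ↦ U (z, x)) ∧
      (∀ x, U (z, x) ∈ Ioo 0 1) ∧ (μ z).map (fun x ↦ U (z, x)) = volume.restrict (Ioo 0 1) := by
  have (z : Z) : NullSingletonClass (μ z) := ⟨hμ z⟩
  obtain ⟨φ, hφ, hφIoo, hφ0⟩ := exists_measurableEmbedding_null_range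
  classical
  let G : Set (Z × ℝ) := {q | q.2 ∈ cdfInjSet (μ q.1) (range φ)}
  -- The null complement of `cdfInjSet` goes injectively into `range φ`, which the cdf avoids.
  let U : Z × ℝ → ℝ := fun q ↦ if q ∈ G then cdf (μ q.1) q.2 else φ q.2
  have hF := Kernel.measurable_cdf μ
  have hG : MeasurableSet G := by
    refine (hF (measurableSet_Ioo.diff hφ.measurableSet_range)).inter <|
      measurableSet_setOfPred.2 <| Measurable.forall fun r ↦ ?_
    exact (measurableSet_setOfPred.1 (measurableSet_lt measurable_const measurable_snd)).imp
      (measurableSet_setOfPred.1 <|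
        measurableSet_lt (hF.comp (measurable_fst.prodMk measurable_const)) hF)
  refine ⟨U, Measurable.ite hG hF (hφ.measurable.comp measurable_snd), fun z ↦ ?_⟩
  set S := cdfInjSet (μ z) (range φ)
  change Injective (S.piecewise (cdf (μ z)) φ) ∧ (∀ x, S.piecewise (cdf (μ z)) φ x ∈ Ioo 0 1) ∧
    (μ z).map (S.piecewise (cdf (μ z)) φ) = _
  refine ⟨(injective_piecewise_iff _).2 ⟨injOn_cdf_cdfInjSet _ _, hφ.injective.injOn, ?_⟩,
    fun x ↦ ?_, ?_⟩
  · rintro x hx y - hxy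
    exact hx.1.2 (hxy ▸ mem_range_self y)
  · by_cases hx : x ∈ S
    · simpa [hx] using hx.1.1
    · simpa [hx] using hφIoo (mem_range_self x)
  · rw [← map_cdf (μ z)]
    refine Measure.map_congr ?_
    filter_upwards [ae_mem_cdfInjSet (μ z) hφ0] with x hx
    exact piecewise_eq_of_mem _ _ _ hx

theorem exists_injective_map_eq_of_real (μ ν : Kernel Z ℝ) [IsMarkovKernel μ] [IsMarkovKernel ν]
    (hμ : ∀ z x, μ z {x} = 0) (hν : ∀ z y, ν z {y} = 0) :
    ∃ f : Z × ℝ → ℝ, Measurable f ∧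
      ∀ z, Injective (fun x ↦ f (z, x)) ∧ (μ z).map (fun x ↦ f (z, x)) = ν z := by
  have (z : Z) : NullSingletonClass (ν z) := ⟨hν z⟩
  obtain ⟨U, hU, hUz⟩ := exists_injective_map_eq_volume_Ioo μ hμ
  refine ⟨fun q ↦ quantile (ν q.1) (U q), ?_, fun z ↦ ⟨?_, ?_⟩⟩
  · exact Measurable.quantile
      (fun _ ↦ (Kernel.measurable_cdf ν).comp (measurable_fst.prodMk measurable_const)) hU
  · obtain ⟨hinj, hmem, -⟩ := hUz z
    exact fun x y h ↦ hinj (injOn_quantile (ν z) (hmem x) (hmem y) h)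
  · obtain ⟨-, -, hmap⟩ := hUz z
    have hUm : Measurable fun x ↦ U (z, x) := hU.comp measurable_prodMk_left
    rw [← map_quantile (ν z), ← hmap, Measure.map_map (measurable_quantile _) hUm]
    rfl

theorem Kernel.map_measurableEquiv_apply_singleton {X Y : Type*} [MeasurableSpace X]
    [MeasurableSpace Y] (κ : Kernel Z X) (e : X ≃ᵐ Y) (z : Z) (y : Y) :
    κ.map e z {y} = κ z {e.symm y} := by
  rw [Kernel.map_apply _ e.measurable, e.map_apply, ← e.image_symm, image_singleton]

theorem exists_injective_map_eq {X Y : Type*} [MeasurableSpace X] [StandardBorelSpace X]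
    [Uncountable X] [MeasurableSpace Y] [StandardBorelSpace Y] [Uncountable Y]
    (μ : Kernel Z X) [IsMarkovKernel μ] (ν : Kernel Z Y) [IsMarkovKernel ν]
    (hμ : ∀ z x, μ z {x} = 0) (hν : ∀ z y, ν z {y} = 0) :
    ∃ f : Z × X → Y, Measurable f ∧
      ∀ z, Injective (fun x ↦ f (z, x)) ∧ (μ z).map (fun x ↦ f (z, x)) = ν z := by
  let e : X ≃ᵐ ℝ := PolishSpace.measurableEquivOfNotCountable not_countable not_countable
  let e' : Y ≃ᵐ ℝ := PolishSpace.measurableEquivOfNotCountable not_countable not_countable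
  have := Kernel.IsMarkovKernel.map μ e.measurable
  have := Kernel.IsMarkovKernel.map ν e'.measurable
  obtain ⟨f, hf, hfz⟩ := exists_injective_map_eq_of_real (μ.map e) (ν.map e')
    (fun z x ↦ by rw [Kernel.map_measurableEquiv_apply_singleton, hμ])
    (fun z y ↦ by rw [Kernel.map_measurableEquiv_apply_singleton, hν])
  refine ⟨fun q ↦ e'.symm (f (q.1, e q.2)), by fun_prop, fun z ↦ ?_⟩
  obtain ⟨hinj, hmap⟩ := hfz z
  refine ⟨e'.symm.injective.comp (hinj.comp e.injective), ?_⟩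
  have hfm : Measurable fun x ↦ f (z, x) := hf.comp measurable_prodMk_left
  calc (μ z).map (fun x ↦ e'.symm (f (z, e x)))
      = ((μ.map e z).map fun x ↦ f (z, x)).map e'.symm := by
        rw [Kernel.map_apply _ e.measurable, Measure.map_map hfm e.measurable,
          Measure.map_map e'.symm.measurable (hfm.comp e.measurable)]
        rfl
    _ = ν z := by rw [hmap, Kernel.map_apply _ e'.measurable, e'.map_symm_map]

end ProbabilityTheory

section SchroederBernstein

variable {α β : Type*} {f : α → β} {g : β → α}

/-- The greatest fixed point of `A ↦ (g '' (f '' A)ᶜ)ᶜ` when `f` is injective, computed by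
countably many iterations from `univ` so that it is measurable for measurable embeddings. -/
def schroederBernsteinSet (f : α → β) (g : β → α) : Set α :=
  ⋂ n : ℕ, (fun A ↦ (g '' (f '' A)ᶜ)ᶜ)^[n] univ

theorem compl_schroederBernsteinSet (hf : Injective f) :
    (schroederBernsteinSet f g)ᶜ = g '' (f '' schroederBernsteinSet f g)ᶜ := by
  refine Subset.antisymm (fun x hx ↦ ?_) ?_
  · by_contra hx'
    refine hx (mem_iInter.2 fun n ↦ ?_)
    cases n with
    | zero => trivial
    | succ n =>
      rw [iterate_succ_apply']
      rintro ⟨y, hy, rfl⟩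
      exact hx' ⟨y, fun hyA ↦ hy (image_mono (iInter_subset _ n) hyA), rfl⟩
  · rintro _ ⟨y, hy, rfl⟩ hA
    rw [schroederBernsteinSet, hf.injOn.image_iInter_eq, mem_compl_iff, mem_iInter] at hy
    push Not at hy
    obtain ⟨n, hn⟩ := hy
    have := mem_iInter.1 hA (n + 1)
    rw [iterate_succ_apply'] at this
    exact this ⟨y, hn, rfl⟩

theorem MeasurableEmbedding.measurableSet_schroederBernsteinSet [MeasurableSpace α]
    [MeasurableSpace β] (hf : MeasurableEmbedding f) (hg : MeasurableEmbedding g) :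
    MeasurableSet (schroederBernsteinSet f g) := by
  refine .iInter fun n ↦ ?_
  induction n with
  | zero => exact .univ
  | succ n ih =>
    rw [iterate_succ_apply']
    exact (hg.measurableSet_image' (hf.measurableSet_image' ih).compl).compl

variable {A : Set α} [DecidablePred (· ∈ A)] {g' : α → β}

theorem bijective_piecewise_of_compl_eq_image (hf : Injective f) (hg' : LeftInverse g' g)
    (hA : Aᶜ = g '' (f '' A)ᶜ) : Bijective (A.piecewise f g') := by
  have hg'A : g' '' Aᶜ = (f '' A)ᶜ := by rw [hA, hg'.image_image]
  refine ⟨(injective_piecewise_iff _).2 ⟨hf.injOn, ?_, ?_⟩, ?_⟩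
  · rintro x hx y hy hxy
    obtain ⟨x, -, rfl⟩ : x ∈ g '' (f '' A)ᶜ := hA ▸ hx
    obtain ⟨y, -, rfl⟩ : y ∈ g '' (f '' A)ᶜ := hA ▸ hy
    rw [hg', hg'] at hxy
    rw [hxy]
  · rintro x hx y hy hxy
    obtain ⟨y, hyB, rfl⟩ : y ∈ g '' (f '' A)ᶜ := hA ▸ hy
    rw [hg'] at hxy
    exact hyB ⟨x, hx, hxy⟩
  · rw [← range_eq_univ, range_piecewise, hg'A, union_compl_self]

theorem map_piecewise_of_compl_eq_image [MeasurableSpace α] [MeasurableSpace β]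
    (hf : MeasurableEmbedding f) (hg : MeasurableEmbedding g) (hg' : LeftInverse g' g)
    (hg'm : Measurable g') (hAm : MeasurableSet A) (hA : Aᶜ = g '' (f '' A)ᶜ)
    {μ : Measure α} {ν : Measure β} (hμ : μ.map f = ν) (hν : ν.map g = μ) :
    μ.map (A.piecewise f g') = ν := by
  have hBm : MeasurableSet (f '' A) := hf.measurableSet_image' hAm
  have hh : Measurable (A.piecewise f g') := hf.measurable.piecewise hAm hg'm
  have hμA : (μ.restrict A).map (A.piecewise f g') = ν.restrict (f '' A) := by
    rw [← hμ, hf.restrict_map, preimage_image_eq _ hf.injective]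
    exact Measure.map_congr <| (ae_restrict_iff' hAm).2 <| ae_of_all _ fun x hx ↦
      piecewise_eq_of_mem _ _ _ hx
  have hμAc : (μ.restrict Aᶜ).map (A.piecewise f g') = ν.restrict (f '' A)ᶜ := by
    rw [← hν, hg.restrict_map, hA, preimage_image_eq _ hg.injective,
      Measure.map_map hh hg.measurable]
    conv_rhs => rw [← Measure.map_id (μ := ν.restrict (f '' A)ᶜ)]
    refine Measure.map_congr <| (ae_restrict_iff' hBm.compl).2 <| ae_of_all _ fun y hy ↦ ?_
    have hgy : g y ∉ A := (hA ▸ mem_image_of_mem g hy : g y ∈ Aᶜ)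
    simp only [comp_apply, piecewise_eq_of_notMem _ _ _ hgy, hg' y, id]
  rw [← Measure.restrict_add_restrict_compl (μ := μ) hAm, Measure.map_add _ _ hh, hμA, hμAc,
    Measure.restrict_add_restrict_compl hBm]

end SchroederBernstein

section Parametrized

variable {Z X Y : Type*}

theorem injective_graph_of_forall_injective {f : Z × X → Y}
    (hf : ∀ z, Injective fun x ↦ f (z, x)) : Injective fun p : Z × X ↦ (p.1, f p) := by
  rintro ⟨z, x⟩ ⟨z', x'⟩ h
  obtain ⟨rfl, h⟩ := Prod.mk.inj h
  rw [hf z h]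

theorem preimage_prodMk_image_graph (f : Z × X → Y) (S : Set (Z × X)) (z : Z) :
    Prod.mk z ⁻¹' ((fun p ↦ (p.1, f p)) '' S) = (fun x ↦ f (z, x)) '' (Prod.mk z ⁻¹' S) := by
  ext y
  simp

theorem preimage_prodMk_schroederBernsteinSet (f : Z × X → Y) (g : Z × Y → X) (z : Z) :
    Prod.mk z ⁻¹' schroederBernsteinSet (fun p ↦ (p.1, f p)) (fun p ↦ (p.1, g p)) =
      schroederBernsteinSet (fun x ↦ f (z, x)) (fun y ↦ g (z, y)) := by
  simp only [schroederBernsteinSet, preimage_iInter]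
  refine iInter_congr fun n ↦ ?_
  induction n with
  | zero => rfl
  | succ n ih =>
    rw [iterate_succ_apply', iterate_succ_apply', preimage_compl, preimage_prodMk_image_graph,
      preimage_compl, preimage_prodMk_image_graph, ih]

variable [MeasurableSpace Z] [StandardBorelSpace Z] [MeasurableSpace X] [StandardBorelSpace X]
  [MeasurableSpace Y] [StandardBorelSpace Y]

theorem exists_measurable_bijective_map_eq (f : Z × X → Y) (g : Z × Y → X) (hf : Measurable f)
    (hg : Measurable g) (hfi : ∀ z, Injective fun x ↦ f (z, x))
    (hgi : ∀ z, Injective fun y ↦ g (z, y)) (μ : Z → Measure X) (ν : Z → Measure Y)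
    (hμ : ∀ z, (μ z).map (fun x ↦ f (z, x)) = ν z) (hν : ∀ z, (ν z).map (fun y ↦ g (z, y)) = μ z) :
    ∃ H : Z × X → Y, Measurable H ∧
      ∀ z, Bijective (fun x ↦ H (z, x)) ∧ (μ z).map (fun x ↦ H (z, x)) = ν z := by
  classical
  -- `MeasurableEmbedding.invFun` below needs a point of `Z × Y`.
  rcases isEmpty_or_nonempty (Z × Y) with hZY | hZY
  · exact ⟨f, hf, fun z ↦ ⟨⟨hfi z, fun y ↦ isEmptyElim (z, y)⟩, hμ z⟩⟩
  have hF : MeasurableEmbedding fun p : Z × X ↦ (p.1, f p) :=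
    (measurable_fst.prodMk hf).measurableEmbedding (injective_graph_of_forall_injective hfi)
  have hG : MeasurableEmbedding fun p : Z × Y ↦ (p.1, g p) :=
    (measurable_fst.prodMk hg).measurableEmbedding (injective_graph_of_forall_injective hgi)
  set A := schroederBernsteinSet (fun p : Z × X ↦ (p.1, f p)) (fun p : Z × Y ↦ (p.1, g p))
  refine ⟨A.piecewise f fun p ↦ (hG.invFun p).2,
    hf.piecewise (hF.measurableSet_schroederBernsteinSet hG) hG.measurable_invFun.snd,
    fun z ↦ ?_⟩
  have hfz : Measurable fun x ↦ f (z, x) := hf.comp measurable_prodMk_left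
  have hgz : Measurable fun y ↦ g (z, y) := hg.comp measurable_prodMk_left
  have hg' : LeftInverse (fun x ↦ (hG.invFun (z, x)).2) fun y ↦ g (z, y) :=
    fun y ↦ congrArg Prod.snd (hG.leftInverse_invFun (z, y))
  have hfe := hfz.measurableEmbedding (hfi z)
  have hge := hgz.measurableEmbedding (hgi z)
  have hAm := hfe.measurableSet_schroederBernsteinSet hge
  have hA := compl_schroederBernsteinSet (hfi z) (g := fun y ↦ g (z, y))
  rw [← preimage_prodMk_schroederBernsteinSet f g z] at hAm hA
  exact ⟨bijective_piecewise_of_compl_eq_image (hfi z) hg' hA,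
    map_piecewise_of_compl_eq_image hfe hge hg'
      (hG.measurable_invFun.snd.comp measurable_prodMk_left) hAm hA (hμ z) (hν z)⟩

end Parametrized

/-- Let `X`, `Y`, `Z` be standard Borel spaces (`X`, `Y` uncountable),
`μ` a kernel from `Z` to `X` and `ν` a kernel from `Z` to `Y` such that all `μ^z`, `ν^z`
are atomless probability measures.  Then there is a jointly Borel `G : Z × X → Y` such
that each `G (z, ·) : X → Y` is a Borel isomorphism with `G (z, ·)_* μ^z = ν^z`. -/
theorem exists_parametrized_borel_isomorphism_of_kernels
    {X Y Z : Type*} [MeasurableSpace X] [StandardBorelSpace X] [Uncountable X]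
    [MeasurableSpace Y] [StandardBorelSpace Y] [Uncountable Y]
    [MeasurableSpace Z] [StandardBorelSpace Z]
    (μ : Kernel Z X) [IsMarkovKernel μ] (ν : Kernel Z Y) [IsMarkovKernel ν]
    (hμ : ∀ (z : Z) (x : X), μ z {x} = 0) (hν : ∀ (z : Z) (y : Y), ν z {y} = 0) :
    ∃ G : Z × X → Y, Measurable G ∧
      ∀ z : Z, Function.Bijective (fun x => G (z, x)) ∧
        (μ z).map (fun x => G (z, x)) = ν z := by
  obtain ⟨f, hf, hfz⟩ := exists_injective_map_eq μ ν hμ hν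
  obtain ⟨g, hg, hgz⟩ := exists_injective_map_eq ν μ hν hμ
  exact exists_measurable_bijective_map_eq f g hf hg (fun z ↦ (hfz z).1) (fun z ↦ (hgz z).1) μ ν
    (fun z ↦ (hfz z).2) (fun z ↦ (hgz z).2)
end

section
/- Let μ ∈ P(X_{1:N}), ν ∈ P(Y_{1:N}), and π ∈ Cpl(μ,ν). Then π is a causal Monge coupling (i.e., causal and concentrated on the graph of a Borel map) if and only if π = (id,T)_*μ for some adapted Borel map T : X_{1:N} → Y_{1:N} with T_*μ = ν. -/
open MeasureTheory ProbabilityTheory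

variable {N : ℕ}

/-- The σ-algebra on the path space `∀ i, X i` generated by the first `t` coordinates. -/
def pathFiltration (X : Fin N → Type*) [∀ i, MeasurableSpace (X i)] (t : ℕ) :
    MeasurableSpace (∀ i, X i) :=
  ⨆ i : Fin N, ⨆ _ : (i : ℕ) < t, MeasurableSpace.comap (fun x => x i) inferInstance

/-- A coupling `π` of laws of `N`-step processes is *causal* if it admits a
disintegration kernel `κ` over its first marginal such that for every `t < N` and every
set `B` depending only on the first `t` `Y`-coordinates, `x ↦ κ x B` is measurable with
respect to the first `t` `X`-coordinates. -/
def IsCausal {X Y : Fin N → Type*} [∀ i, MeasurableSpace (X i)] [∀ i, MeasurableSpace (Y i)]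
    (π : Measure ((∀ i, X i) × (∀ i, Y i))) : Prop :=
  ∃ κ : Kernel (∀ i, X i) (∀ i, Y i), IsMarkovKernel κ ∧
    π = (π.map Prod.fst).compProd κ ∧
    ∀ t : ℕ, t < N → ∀ B : Set (∀ i, Y i), MeasurableSet[pathFiltration Y t] B →
      Measurable[pathFiltration X t] (fun x => κ x B)

/-- A coupling is *bicausal* if both it and its coordinate swap are causal. -/
def IsBicausal {X Y : Fin N → Type*} [∀ i, MeasurableSpace (X i)] [∀ i, MeasurableSpace (Y i)]
    (π : Measure ((∀ i, X i) × (∀ i, Y i))) : Prop :=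
  IsCausal π ∧ IsCausal (π.map Prod.swap)

/-- A map between path spaces is *adapted* if its `t`-th component depends only on the
first `t` coordinates. -/
def IsAdapted {X Y : Fin N → Type*} (T : (∀ i, X i) → (∀ i, Y i)) : Prop :=
  ∀ (t : Fin N) (x x' : ∀ i, X i), (∀ s, s ≤ t → x s = x' s) → T x t = T x' t

/-- A map is *biadapted* if it is adapted and has a (two-sided) inverse which is also
adapted; in particular it is a bijection. -/
def IsBiadapted {X Y : Fin N → Type*} (T : (∀ i, X i) → (∀ i, Y i)) : Prop :=
  IsAdapted T ∧ ∃ S : (∀ i, Y i) → (∀ i, X i),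
    Function.LeftInverse S T ∧ Function.RightInverse S T ∧ IsAdapted S

section Aux

lemma pathFiltration_eq_comap (X : Fin N → Type*) [∀ i, MeasurableSpace (X i)] (t : ℕ) :
    pathFiltration X t =
      MeasurableSpace.comap (fun (x : ∀ i, X i) (j : {i : Fin N // (i : ℕ) < t}) => x j)
        MeasurableSpace.pi := by
  rw [MeasurableSpace.pi, MeasurableSpace.comap_iSup]
  simp_rw [MeasurableSpace.comap_comp, Function.comp_def]
  apply le_antisymm
  · refine iSup_le fun i => iSup_le fun hi => ?_
    exact le_iSup (fun j : {i : Fin N // (i : ℕ) < t} =>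
      MeasurableSpace.comap (fun x : ∀ i, X i => x j) inferInstance) ⟨i, hi⟩
  · refine iSup_le fun j => ?_
    exact le_iSup_of_le j.1 (le_iSup_of_le j.2 le_rfl)

lemma pathFiltration_le (X : Fin N → Type*) [∀ i, MeasurableSpace (X i)] (t : ℕ) :
    pathFiltration X t ≤ MeasurableSpace.pi := by
  refine iSup_le fun i => iSup_le fun _ => ?_
  exact (measurable_pi_apply i).comap_le

lemma comap_eval_le_pathFiltration {X : Fin N → Type*} [∀ i, MeasurableSpace (X i)]
    (t : Fin N) :
    MeasurableSpace.comap (fun x : ∀ i, X i => x t) inferInstance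
      ≤ pathFiltration X ((t : ℕ) + 1) :=
  le_iSup_of_le t (le_iSup_of_le (Nat.lt_succ_self _) le_rfl)

lemma adapted_preimage {X Y : Fin N → Type*} [∀ i, MeasurableSpace (X i)]
    [∀ i, MeasurableSpace (Y i)] [Nonempty (∀ i, X i)]
    {T : (∀ i, X i) → (∀ i, Y i)} (hTm : Measurable T) (hTa : IsAdapted T)
    {t : ℕ} {B : Set (∀ i, Y i)} (hB : MeasurableSet[pathFiltration Y t] B) :
    MeasurableSet[pathFiltration X t] (T ⁻¹' B) := by
  rw [pathFiltration_eq_comap] at hB ⊢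
  rw [MeasurableSpace.measurableSet_comap] at hB ⊢
  obtain ⟨B', hB', rfl⟩ := hB
  obtain ⟨c⟩ := ‹Nonempty (∀ i, X i)›
  set ext : (∀ j : {i : Fin N // (i : ℕ) < t}, X j) → ∀ i, X i :=
    fun z i => if h : (i : ℕ) < t then z ⟨i, h⟩ else c i with hext
  have hextm : Measurable ext := by
    refine measurable_pi_lambda _ fun i => ?_
    by_cases h : (i : ℕ) < t
    · simpa [hext, h] using measurable_pi_apply (⟨i, h⟩ : {i : Fin N // (i : ℕ) < t})
    · simp [hext, h]
  refine ⟨(fun z (j : {i : Fin N // (i : ℕ) < t}) => T (ext z) j.1) ⁻¹' B',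
    ((measurable_pi_lambda _ fun j => (measurable_pi_apply j.1).comp (hTm.comp hextm))) hB', ?_⟩
  ext x
  simp only [Set.mem_preimage]
  have key : (fun j : {i : Fin N // (i : ℕ) < t} =>
      T (ext fun j' : {i : Fin N // (i : ℕ) < t} => x j'.1) j.1) =
      fun j : {i : Fin N // (i : ℕ) < t} => T x j.1 := by
    funext j
    refine hTa j.1 _ _ fun s hs => ?_
    have hst : (s : ℕ) < t := lt_of_le_of_lt (Fin.le_def.mp hs) j.2
    simp [hext, hst]
  rw [key]

lemma compProd_deterministic' {α β : Type*} [MeasurableSpace α] [MeasurableSpace β]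
    (μ : Measure α) [SFinite μ] {T : α → β} (hT : Measurable T) :
    μ ⊗ₘ Kernel.deterministic T hT = μ.map (fun x => (x, T x)) := by
  have hpair : Measurable fun x : α => (x, T x) := measurable_id.prodMk hT
  ext s hs
  rw [Measure.compProd_apply hs, Measure.map_apply hpair hs]
  have h1 : ∀ x, Kernel.deterministic T hT x (Prod.mk x ⁻¹' s)
      = ((fun x => (x, T x)) ⁻¹' s).indicator (1 : α → ENNReal) x := by
    intro x
    rw [Kernel.deterministic_apply' hT _ (measurable_prodMk_left hs)]
    by_cases hx : (x, T x) ∈ s <;>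
      simp [Set.indicator_apply, Set.mem_preimage, hx]
  simp_rw [h1]
  exact lintegral_indicator_one (hs.preimage hpair)

lemma iInf_rat_ite {r : ℝ} (hr : r ∈ Set.Ioo (-2 : ℝ) 2) :
    ⨅ q : ℚ, (if r ≤ (q : ℝ) then max (-2 : ℝ) (q : ℝ) else 2) = r := by
  have hbdd : BddBelow (Set.range fun q : ℚ => if r ≤ (q : ℝ) then max (-2 : ℝ) (q : ℝ) else 2) := by
    refine ⟨-2, ?_⟩
    rintro _ ⟨q, rfl⟩
    dsimp only
    split
    · exact le_max_left _ _
    · norm_num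
  apply le_antisymm
  · refine le_of_forall_pos_le_add fun ε hε => ?_
    obtain ⟨q, hq1, hq2⟩ := exists_rat_btwn (lt_add_of_pos_right r hε)
    have h1 : (if r ≤ (q : ℝ) then max (-2 : ℝ) (q : ℝ) else 2) = (q : ℝ) := by
      rw [if_pos hq1.le, max_eq_right (le_trans hr.1.le hq1.le)]
    calc ⨅ q : ℚ, (if r ≤ (q : ℝ) then max (-2 : ℝ) (q : ℝ) else 2)
        ≤ _ := ciInf_le hbdd q
      _ ≤ r + ε := by rw [h1]; exact hq2.le
  · refine le_ciInf fun q => ?_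
    split
    · exact le_max_of_le_right ‹r ≤ (q : ℝ)›
    · exact hr.2.le

/-- Doob–Dynkin style a.e. factorization through a map `p`. -/
lemma exists_factor_ae {α Z E : Type*} [MeasurableSpace α] [MeasurableSpace Z]
    [TopologicalSpace E] [PolishSpace E] [MeasurableSpace E] [BorelSpace E] [Nonempty E]
    (μ : Measure α) (p : α → Z) (f : α → E)
    (h : ∀ A : Set E, MeasurableSet A → ∃ C : Set Z, MeasurableSet C ∧
        ∀ᵐ x ∂μ, (p x ∈ C ↔ f x ∈ A)) :
    ∃ g : Z → E, Measurable g ∧ ∀ᵐ x ∂μ, g (p x) = f x := by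
  classical
  obtain ⟨e₀, he₀⟩ := exists_measurableEmbedding_real E
  have harctan : MeasurableEmbedding Real.arctan :=
    Real.continuous_arctan.measurableEmbedding Real.arctan_injective
  set e : E → ℝ := fun y => Real.arctan (e₀ y) with he_def
  have he : MeasurableEmbedding e := harctan.comp he₀
  have hrange : ∀ y, e y ∈ Set.Ioo (-2 : ℝ) 2 := by
    intro y
    constructor
    · have := Real.neg_pi_div_two_lt_arctan (e₀ y)
      nlinarith [Real.pi_lt_d2]
    · have := Real.arctan_lt_pi_div_two (e₀ y)
      nlinarith [Real.pi_lt_d2]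
  have hA : ∀ q : ℚ, MeasurableSet (e ⁻¹' Set.Iic (q : ℝ)) := fun q =>
    he.measurable measurableSet_Iic
  choose C hCm hCae using fun q : ℚ => h _ (hA q)
  set ψ : Z → ℝ := fun z => ⨅ q : ℚ, (if z ∈ C q then max (-2 : ℝ) (q : ℝ) else 2) with hψ
  have hψm : Measurable ψ := by
    refine Measurable.iInf fun q => Measurable.ite (hCm q) measurable_const measurable_const
  obtain ⟨r, hrm, hre⟩ := he.exists_measurable_extend measurable_id (fun _ => ‹Nonempty E›)
  refine ⟨fun z => r (ψ z), hrm.comp hψm, ?_⟩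
  filter_upwards [ae_all_iff.2 hCae] with x hx
  have hψx : ψ (p x) = e (f x) := by
    have h2 : ψ (p x) = ⨅ q : ℚ, (if e (f x) ≤ (q : ℝ) then max (-2 : ℝ) (q : ℝ) else 2) := by
      rw [hψ]
      dsimp only
      congr 1
      funext q
      have hiff : (p x ∈ C q) ↔ e (f x) ≤ (q : ℝ) := by
        rw [hx q]; simp [Set.mem_preimage, Set.mem_Iic]
      by_cases hq : p x ∈ C q
      · rw [if_pos hq, if_pos (hiff.mp hq)]
      · rw [if_neg hq, if_neg (fun hle => hq (hiff.mpr hle))]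
    rw [h2]
    exact iInf_rat_ite (hrange (f x))
  rw [hψx]
  have h3 := congrFun hre (f x)
  simpa using h3

end Aux

/-- Let `π ∈ Cpl(μ,ν)` on products of Polish spaces.  Then `π` is a
causal Monge coupling (causal and of the form `(id,T)_*μ` for a Borel `T`) if and only
if `π = (id,T)_*μ` for some *adapted* Borel map `T` with `T_*μ = ν`. -/
theorem causal_monge_iff_adapted
    {X Y : Fin N → Type*}
    [∀ i, TopologicalSpace (X i)] [∀ i, PolishSpace (X i)]
    [∀ i, MeasurableSpace (X i)] [∀ i, BorelSpace (X i)]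
    [∀ i, TopologicalSpace (Y i)] [∀ i, PolishSpace (Y i)]
    [∀ i, MeasurableSpace (Y i)] [∀ i, BorelSpace (Y i)]
    (μ : Measure (∀ i, X i)) [IsProbabilityMeasure μ]
    (ν : Measure (∀ i, Y i)) [IsProbabilityMeasure ν]
    (π : Measure ((∀ i, X i) × (∀ i, Y i)))
    (hπ₁ : π.map Prod.fst = μ) (hπ₂ : π.map Prod.snd = ν) :
    (IsCausal π ∧ ∃ T : (∀ i, X i) → (∀ i, Y i),
        Measurable T ∧ π = μ.map (fun x => (x, T x)))
    ↔ (∃ T : (∀ i, X i) → (∀ i, Y i),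
        Measurable T ∧ IsAdapted T ∧ μ.map T = ν ∧ π = μ.map (fun x => (x, T x))) := by
  have hXne : Nonempty (∀ i, X i) := by
    by_contra h
    rw [not_nonempty_iff] at h
    have h1 : μ Set.univ = 1 := measure_univ
    rw [Set.univ_eq_empty_iff.mpr h, measure_empty] at h1
    exact one_ne_zero h1.symm
  have hYne : Nonempty (∀ i, Y i) := by
    by_contra h
    rw [not_nonempty_iff] at h
    have h1 : ν Set.univ = 1 := measure_univ
    rw [Set.univ_eq_empty_iff.mpr h, measure_empty] at h1
    exact one_ne_zero h1.symm
  constructor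
  · rintro ⟨⟨κ, hκM, hκπ, hκmeas⟩, T, hTm, hπT⟩
    haveI := hκM
    haveI := hXne
    haveI := hYne
    have hpair : Measurable fun x : (∀ i, X i) => (x, T x) := measurable_id.prodMk hTm
    haveI : IsProbabilityMeasure π := by
      constructor
      rw [← Set.preimage_univ (f := Prod.fst),
        ← Measure.map_apply measurable_fst MeasurableSet.univ, hπ₁]
      exact measure_univ
    have hfst : π.fst = μ := hπ₁
    have h1 : π = π.fst ⊗ₘ κ := by rw [hfst, ← hπ₁]; exact hκπ
    have h2 : π = π.fst ⊗ₘ Kernel.deterministic T hTm := by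
      rw [hfst, compProd_deterministic' μ hTm]; exact hπT
    have hκd : ∀ᵐ x ∂μ, κ x = Measure.dirac (T x) := by
      have ha := eq_condKernel_of_measure_eq_compProd κ h1
      have hb := eq_condKernel_of_measure_eq_compProd (Kernel.deterministic T hTm) h2
      rw [hfst] at ha hb
      filter_upwards [ha, hb] with x hax hbx
      rw [hax, ← hbx, Kernel.deterministic_apply]
    have H : ∀ t : Fin N, ∃ g : ((∀ j : {i : Fin N // (i : ℕ) < (t : ℕ) + 1}, X j.1)) → Y t,
        Measurable g ∧ ∀ᵐ x ∂μ, g (fun j => x j.1) = T x t := by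
      intro t
      by_cases ht : (t : ℕ) + 1 < N
      · haveI : Nonempty (Y t) := ⟨hYne.some t⟩
        refine exists_factor_ae μ
          (fun x (j : {i : Fin N // (i : ℕ) < (t : ℕ) + 1}) => x j.1)
          (fun x => T x t) ?_
        intro A hA
        have hBpath : MeasurableSet[pathFiltration Y ((t : ℕ) + 1)]
            ((fun y : ∀ i, Y i => y t) ⁻¹' A) :=
          comap_eval_le_pathFiltration t _ ⟨A, hA, rfl⟩
        have hkmeas := hκmeas ((t : ℕ) + 1) ht _ hBpath
        rw [pathFiltration_eq_comap] at hkmeas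
        have hD := hkmeas (measurableSet_singleton (1 : ENNReal))
        rw [MeasurableSpace.measurableSet_comap] at hD
        obtain ⟨C, hCm, hCpre⟩ := hD
        refine ⟨C, hCm, ?_⟩
        filter_upwards [hκd] with x hκx
        have hBm : MeasurableSet ((fun y : ∀ i, Y i => y t) ⁻¹' A) :=
          (measurable_pi_apply t) hA
        have hmem : ((fun j : {i : Fin N // (i : ℕ) < (t : ℕ) + 1} => x j.1) ∈ C)
            ↔ κ x ((fun y : ∀ i, Y i => y t) ⁻¹' A) = 1 := by
          constructor
          · intro hc
            have hx' : x ∈ (fun x => κ x ((fun y : ∀ i, Y i => y t) ⁻¹' A)) ⁻¹' {1} := by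
              rw [← hCpre]; exact hc
            exact hx'
          · intro hc
            have hx' : x ∈ (fun x => κ x ((fun y : ∀ i, Y i => y t) ⁻¹' A)) ⁻¹' {1} := hc
            rw [← hCpre] at hx'
            exact hx'
        rw [hmem, hκx, Measure.dirac_apply' _ hBm]
        by_cases hTx : T x t ∈ A <;>
          simp [Set.indicator_apply, Set.mem_preimage, hTx]
      · have hlt : ∀ i : Fin N, (i : ℕ) < (t : ℕ) + 1 := fun i =>
          lt_of_lt_of_le i.2 (not_lt.mp ht)
        refine ⟨fun z => T (fun i => z ⟨i, hlt i⟩) t, ?_, ?_⟩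
        · exact (measurable_pi_apply t).comp
            (hTm.comp (measurable_pi_lambda _ fun i => measurable_pi_apply _))
        · exact Filter.Eventually.of_forall fun x => rfl
    choose g hgm hgae using H
    set T' : (∀ i, X i) → ∀ i, Y i := fun x t => g t (fun j => x j.1) with hT'def
    have hT'm : Measurable T' := measurable_pi_lambda _ fun t =>
      (hgm t).comp (measurable_pi_lambda _ fun j => measurable_pi_apply _)
    have hT'T : T' =ᵐ[μ] T := by
      filter_upwards [ae_all_iff.2 hgae] with x hx
      funext t
      exact hx t
    have hπT' : π = μ.map (fun x => (x, T' x)) := by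
      rw [hπT]
      exact Measure.map_congr (hT'T.mono fun x hx => by
        show (x, T x) = (x, T' x)
        rw [hx])
    have hmapT : μ.map T = ν := by
      rw [← hπ₂, hπT, Measure.map_map measurable_snd hpair]
      rfl
    refine ⟨T', hT'm, ?_, ?_, hπT'⟩
    · intro t x x' hag
      show g t _ = g t _
      congr 1
      funext j
      exact hag j.1 (Fin.le_def.mpr (Nat.lt_succ_iff.mp j.2))
    · rw [Measure.map_congr hT'T, hmapT]
  · rintro ⟨T, hTm, hTa, hTν, hπT⟩
    haveI := hXne
    refine ⟨⟨Kernel.deterministic T hTm, inferInstance, ?_, ?_⟩, T, hTm, hπT⟩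
    · rw [hπ₁]
      rw [show (μ.compProd (Kernel.deterministic T hTm)) = μ ⊗ₘ Kernel.deterministic T hTm from rfl,
        compProd_deterministic' μ hTm]
      exact hπT
    · intro t ht B hB
      have hBm : MeasurableSet B := pathFiltration_le Y t _ hB
      have hpre := adapted_preimage hTm hTa hB
      have hfun : (fun x => Kernel.deterministic T hTm x B)
          = (T ⁻¹' B).indicator (fun _ => (1 : ENNReal)) := by
        funext x
        rw [Kernel.deterministic_apply' hTm _ hBm]
        by_cases hx : T x ∈ B <;> simp [Set.indicator_apply, Set.mem_preimage, hx]
      rw [hfun]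
      exact Measurable.indicator measurable_const hpre
end

section
/- Let μ ∈ P(X_{1:N}), ν ∈ P(Y_{1:N}), and let μ̂ := μ ⊗ λ^N on X̂ := ∏_t (X_t × [0,1]) and similarly ν̂. If π̂ ∈ Cpl_{bc}(μ̂, ν̂) is a bicausal coupling on the extended spaces (with extra coordinate [0,1] added in each time step), then its projection π := (pr_{X×Y})_* π̂ to X_{1:N} × Y_{1:N} is a bicausal coupling of μ and ν. -/
open MeasureTheory ProbabilityTheory

variable {N : ℕ}

/-- The law of a process extended by i.i.d. uniform `[0,1]` randomization coordinates,
one in each time step: `μ̂ = μ ⊗ λ^N` on `∏ t (X t × [0,1])`. -/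
noncomputable def extendedLaw {N : ℕ} {X : Fin N → Type*} [∀ i, MeasurableSpace (X i)]
    (μ : Measure (∀ i, X i)) : Measure (∀ i, X i × unitInterval) :=
  (μ.prod (Measure.pi fun _ : Fin N => (volume : Measure unitInterval))).map
    (fun p => fun i => (p.1 i, p.2 i))

/-- The projection from a pair of extended paths to the pair of original paths. -/
def projPaths {N : ℕ} {X Y : Fin N → Type*} :
    (∀ i, X i × unitInterval) × (∀ i, Y i × unitInterval) → (∀ i, X i) × (∀ i, Y i) :=
  fun q => (fun i => (q.1 i).1, fun i => (q.2 i).1)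

section AuxProj

def pairE {X : Fin N → Type*} :
    ((∀ i, X i) × (∀ i : Fin N, unitInterval)) → (∀ i, X i × unitInterval) :=
  fun p i => (p.1 i, p.2 i)

def projFst {X : Fin N → Type*} : (∀ i, X i × unitInterval) → (∀ i, X i) :=
  fun x i => (x i).1

lemma measurable_pairE {X : Fin N → Type*} [∀ i, MeasurableSpace (X i)] :
    Measurable (pairE (X := X)) :=
  measurable_pi_lambda _ fun i =>
    ((measurable_pi_apply i).comp measurable_fst).prodMk
      ((measurable_pi_apply i).comp measurable_snd)

lemma measurable_projFst {X : Fin N → Type*} [∀ i, MeasurableSpace (X i)] :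
    Measurable (projFst (X := X)) :=
  measurable_pi_lambda _ fun i => measurable_fst.comp (measurable_pi_apply i)

lemma measurable_pathFiltration_apply {X : Fin N → Type*} [∀ i, MeasurableSpace (X i)]
    {t : ℕ} {i : Fin N} (hi : (i : ℕ) < t) :
    Measurable[pathFiltration X t] fun x => x i :=
  Measurable.of_comap_le (le_iSup_of_le i (le_iSup_of_le hi le_rfl))

lemma measurable_to_pathFiltration {α : Type*} {mα : MeasurableSpace α}
    {Y : Fin N → Type*} [∀ i, MeasurableSpace (Y i)] {t : ℕ} {f : α → ∀ i, Y i}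
    (h : ∀ i : Fin N, (i : ℕ) < t → Measurable fun a => f a i) :
    Measurable[mα, pathFiltration Y t] f := by
  rw [measurable_iff_comap_le, pathFiltration, MeasurableSpace.comap_iSup]
  refine iSup_le fun i => ?_
  rw [MeasurableSpace.comap_iSup]
  refine iSup_le fun hi => ?_
  rw [MeasurableSpace.comap_comp]
  exact Measurable.comap_le (h i hi)

lemma measurable_projFst_pathFiltration {Y : Fin N → Type*} [∀ i, MeasurableSpace (Y i)]
    {t : ℕ} :
    Measurable[pathFiltration (fun i => Y i × unitInterval) t, pathFiltration Y t]
      (projFst (X := Y)) :=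
  measurable_to_pathFiltration fun i hi =>
    measurable_fst.comp (measurable_pathFiltration_apply (X := fun i => Y i × unitInterval) hi)

lemma measurable_pairE_pathFiltration {X : Fin N → Type*} [∀ i, MeasurableSpace (X i)]
    {t : ℕ} :
    Measurable[(pathFiltration X t).prod MeasurableSpace.pi,
      pathFiltration (fun i => X i × unitInterval) t] (pairE (X := X)) :=
  measurable_to_pathFiltration fun i hi =>
    ((measurable_pathFiltration_apply hi).comp measurable_fst).prodMk
      ((measurable_pi_apply i).comp measurable_snd)

lemma measurable_projPaths {X Y : Fin N → Type*} [∀ i, MeasurableSpace (X i)]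
    [∀ i, MeasurableSpace (Y i)] :
    Measurable (projPaths (X := X) (Y := Y)) :=
  ((measurable_projFst (X := X)).comp measurable_fst).prodMk
    ((measurable_projFst (X := Y)).comp measurable_snd)

lemma extendedLaw_map_projFst {X : Fin N → Type*} [∀ i, MeasurableSpace (X i)]
    (μ : Measure (∀ i, X i)) [IsProbabilityMeasure μ] :
    (extendedLaw μ).map projFst = μ := by
  show ((μ.prod (Measure.pi fun _ : Fin N => (volume : Measure unitInterval))).map
    pairE).map projFst = μ
  rw [Measure.map_map measurable_projFst measurable_pairE]
  have h : (projFst ∘ pairE : _ → ∀ i, X i) = Prod.fst := rfl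
  rw [h, Measure.map_fst_prod, measure_univ, one_smul]

lemma isProbabilityMeasure_extendedLaw {X : Fin N → Type*} [∀ i, MeasurableSpace (X i)]
    (μ : Measure (∀ i, X i)) [IsProbabilityMeasure μ] :
    IsProbabilityMeasure (extendedLaw μ) :=
  Measure.isProbabilityMeasure_map (measurable_pairE (X := X)).aemeasurable

lemma isCausal_map_projPaths {X Y : Fin N → Type*} [∀ i, MeasurableSpace (X i)]
    [∀ i, MeasurableSpace (Y i)]
    (μ : Measure (∀ i, X i)) [IsProbabilityMeasure μ]
    (πhat : Measure ((∀ i, X i × unitInterval) × (∀ i, Y i × unitInterval)))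
    (hπ₁ : πhat.map Prod.fst = extendedLaw μ)
    (hc : IsCausal (X := fun i => X i × unitInterval) (Y := fun i => Y i × unitInterval) πhat) :
    (πhat.map projPaths).map Prod.fst = μ ∧ IsCausal (πhat.map projPaths) := by
  haveI := isProbabilityMeasure_extendedLaw μ
  haveI : IsProbabilityMeasure πhat := by
    constructor
    rw [← Set.preimage_univ (f := (Prod.fst : _ → ∀ i, X i × unitInterval)),
      ← Measure.map_apply measurable_fst MeasurableSet.univ, hπ₁]
    exact measure_univ
  obtain ⟨κh, hκM, hdis, hκmeas⟩ := hc
  set lamN : Measure (∀ _ : Fin N, unitInterval) :=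
    Measure.pi fun _ : Fin N => (volume : Measure unitInterval) with hlamN
  have hfst : (πhat.map projPaths).map Prod.fst = μ := by
    rw [Measure.map_map measurable_fst measurable_projPaths]
    have h : (Prod.fst ∘ projPaths : (∀ i, X i × unitInterval) × (∀ i, Y i × unitInterval) → ∀ i, X i) = projFst ∘ Prod.fst := rfl
    rw [h, ← Measure.map_map measurable_projFst measurable_fst, hπ₁,
      extendedLaw_map_projFst]
  refine ⟨hfst, ?_⟩
  set κ₀ : Kernel (∀ i, X i) (∀ i, X i × unitInterval) :=
    Kernel.map (Kernel.id ×ₖ Kernel.const _ lamN) pairE with hκ₀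
  set κ : Kernel (∀ i, X i) (∀ i, Y i) := Kernel.map (κh ∘ₖ κ₀) projFst with hκdef
  haveI : IsMarkovKernel κ₀ := Kernel.IsMarkovKernel.map _ measurable_pairE
  haveI : IsMarkovKernel κ := Kernel.IsMarkovKernel.map _ measurable_projFst
  have hκ_apply : ∀ (x : ∀ i, X i) (B : Set (∀ i, Y i)), MeasurableSet B →
      κ x B = ∫⁻ u, κh (pairE (x, u)) (projFst ⁻¹' B) ∂lamN := by
    intro x B hB
    rw [hκdef, Kernel.map_apply' _ measurable_projFst _ hB,
      Kernel.comp_apply' _ _ _ (measurable_projFst hB), hκ₀,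
      Kernel.map_apply _ measurable_pairE,
      lintegral_map (Kernel.measurable_coe κh (measurable_projFst hB)) measurable_pairE,
      Kernel.prod_apply, Kernel.id_apply, Kernel.const_apply, Measure.dirac_prod]
    exact lintegral_map ((Kernel.measurable_coe κh (measurable_projFst hB)).comp
      measurable_pairE) measurable_prodMk_left
  refine ⟨κ, inferInstance, ?_, ?_⟩
  · -- disintegration
    rw [hfst]
    refine ext_of_generate_finite _ generateFrom_prod.symm isPiSystem_prod ?_ ?_
    · rintro s ⟨A, hA, B, hB, rfl⟩
      simp only [Set.mem_setOf_eq] at hA hB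
      have hEL : extendedLaw μ = (μ.prod lamN).map pairE := rfl
      have hpre : projPaths ⁻¹' (A ×ˢ B) = (projFst ⁻¹' A) ×ˢ (projFst ⁻¹' B) := rfl
      rw [Measure.map_apply measurable_projPaths (hA.prod hB), hpre, hdis, hπ₁,
        Measure.compProd_apply_prod (measurable_projFst hA) (measurable_projFst hB),
        Measure.compProd_apply_prod hA hB, hEL,
        setLIntegral_map (measurable_projFst hA)
          (Kernel.measurable_coe κh (measurable_projFst hB)) measurable_pairE]
      have hpre2 : pairE ⁻¹' (projFst ⁻¹' A)
          = A ×ˢ (Set.univ : Set (∀ _ : Fin N, unitInterval)) := by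
        ext p
        simp only [Set.mem_preimage, Set.mem_prod, Set.mem_univ, and_true]
        exact Iff.rfl
      have hFmeas : AEMeasurable (fun p : (∀ i, X i) × (∀ _ : Fin N, unitInterval) =>
          κh (pairE p) (projFst ⁻¹' B)) ((μ.restrict A).prod lamN) :=
        Measurable.aemeasurable (by
          exact (Kernel.measurable_coe κh (measurable_projFst hB)).comp measurable_pairE)
      rw [hpre2, ← Measure.prod_restrict, Measure.restrict_univ, lintegral_prod _ hFmeas]
      exact lintegral_congr_ae (Filter.Eventually.of_forall fun x =>
        (hκ_apply x B hB).symm)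
    · haveI : IsProbabilityMeasure (πhat.map projPaths) :=
        Measure.isProbabilityMeasure_map measurable_projPaths.aemeasurable
      simp [measure_univ]
  · -- adaptedness
    intro t ht B hB
    have hBfull : MeasurableSet B := pathFiltration_le Y t B hB
    have hBhat : MeasurableSet[pathFiltration (fun i => Y i × unitInterval) t]
        (projFst ⁻¹' B) := measurable_projFst_pathFiltration hB
    have hmeas := hκmeas t ht _ hBhat
    have heq : (fun x => κ x B) =
        fun x => ∫⁻ u, κh (pairE (x, u)) (projFst ⁻¹' B) ∂lamN :=
      funext fun x => hκ_apply x B hBfull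
    rw [heq]
    exact @Measurable.lintegral_prod_right' _ _ (pathFiltration X t) _ lamN _ _
      (hmeas.comp measurable_pairE_pathFiltration)

end AuxProj

/-- If `π̂` is a bicausal coupling of the extended laws `μ̂ = μ ⊗ λ^N`
and `ν̂ = ν ⊗ λ^N` (an extra uniform `[0,1]` coordinate added in each time step), then
its projection to `X_{1:N} × Y_{1:N}` is a bicausal coupling of `μ` and `ν`. -/
theorem isBicausal_of_projection_of_extended_bicausal
    {X Y : Fin N → Type*}
    [∀ i, TopologicalSpace (X i)] [∀ i, PolishSpace (X i)]
    [∀ i, MeasurableSpace (X i)] [∀ i, BorelSpace (X i)]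
    [∀ i, TopologicalSpace (Y i)] [∀ i, PolishSpace (Y i)]
    [∀ i, MeasurableSpace (Y i)] [∀ i, BorelSpace (Y i)]
    (μ : Measure (∀ i, X i)) [IsProbabilityMeasure μ]
    (ν : Measure (∀ i, Y i)) [IsProbabilityMeasure ν]
    (πhat : Measure ((∀ i, X i × unitInterval) × (∀ i, Y i × unitInterval)))
    (hπ₁ : πhat.map Prod.fst = extendedLaw μ)
    (hπ₂ : πhat.map Prod.snd = extendedLaw ν)
    (hbc : IsBicausal (X := fun i => X i × unitInterval)
      (Y := fun i => Y i × unitInterval) πhat) :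
    (πhat.map projPaths).map Prod.fst = μ ∧
    (πhat.map projPaths).map Prod.snd = ν ∧
    IsBicausal (πhat.map projPaths) := by
  obtain ⟨hc1, hc2⟩ := hbc
  have h1 := isCausal_map_projPaths μ πhat hπ₁ hc1
  have hswap : (πhat.map projPaths).map Prod.swap
      = (πhat.map Prod.swap).map projPaths := by
    rw [Measure.map_map measurable_swap measurable_projPaths,
      Measure.map_map measurable_projPaths measurable_swap]
    rfl
  have hπ₁' : (πhat.map Prod.swap).map Prod.fst = extendedLaw ν := by
    rw [Measure.map_map measurable_fst measurable_swap]
    exact hπ₂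
  have h2 := isCausal_map_projPaths ν (πhat.map Prod.swap) hπ₁' hc2
  refine ⟨h1.1, ?_, h1.2, ?_⟩
  · have hsnd : (πhat.map projPaths).map Prod.snd
        = ((πhat.map projPaths).map Prod.swap).map Prod.fst := by
      rw [Measure.map_map measurable_fst measurable_swap]
      rfl
    rw [hsnd, hswap]
    exact h2.1
  · rw [hswap]
    exact h2.2
end

section
/- Let N = 2, X₁ = X₂ = Y₁ = Y₂ = [0,1], μ = λ ⊗ δ₀ and ν = λ ⊗ λ (λ Lebesgue on [0,1]). Then there is no bicausal coupling of μ and ν concentrated on the graph of a bijection; i.e., Cpl_{bc}(μ,ν) ∩ Cpl_biM(μ,ν) = ∅, although both μ and ν are continuous measures. -/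
open MeasureTheory ProbabilityTheory

variable {N : ℕ}

lemma pathFiltration_one_eq (X : Fin 2 → Type*) [∀ i, MeasurableSpace (X i)] :
    pathFiltration X 1 = MeasurableSpace.comap (fun x => x 0) inferInstance := by
  apply le_antisymm
  · apply iSup_le
    intro i
    apply iSup_le
    intro hi
    have h0 : i = 0 := Fin.ext (by omega)
    subst h0
    exact le_rfl
  · exact le_iSup_of_le (0 : Fin 2) (le_iSup_of_le (by norm_num) le_rfl)

lemma comap_const_on {α β γ : Type*} [mβ : MeasurableSpace β] [MeasurableSpace γ]
    [MeasurableSingletonClass γ] {p : α → β} {G : α → γ}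
    (hG : Measurable[mβ.comap p] G) {x y : α} (h : p x = p y) : G x = G y := by
  obtain ⟨A, -, hAeq⟩ := hG (measurableSet_singleton (G x))
  have hx : x ∈ p ⁻¹' A := by rw [hAeq]; exact rfl
  have hy : y ∈ p ⁻¹' A := by simp only [Set.mem_preimage, ← h]; exact hx
  rw [hAeq] at hy
  exact hy.symm

lemma noAtoms_aux (m2 : Measure unitInterval) [SFinite m2] :
    NoAtoms (((volume : Measure unitInterval).prod m2).map
      (MeasurableEquiv.finTwoArrow (α := unitInterval)).symm) := by
  set e := MeasurableEquiv.finTwoArrow (α := unitInterval)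
  constructor
  intro x
  rw [MeasurableEquiv.map_apply]
  refine measure_mono_null (t := ({x 0} : Set unitInterval) ×ˢ (Set.univ : Set unitInterval))
    (fun q hq => ?_) ?_
  · -- q ∈ e.symm ⁻¹' {x} → q ∈ {x 0} ×ˢ Set.univ
    have hq' : e.symm q = x := hq
    refine ⟨?_, trivial⟩
    have : q = e x := by rw [← hq', MeasurableEquiv.apply_symm_apply]
    rw [this]
    rfl
  · have hsing : (volume : Measure unitInterval) {x 0} = 0 := by
      rw [unitInterval.volume_def,
        (MeasurableEmbedding.subtype_coe measurableSet_Icc).comap_apply, Set.image_singleton]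
      exact Real.volume_singleton
    rw [Measure.prod_prod, hsing, zero_mul]

/-- For `N = 2`, `X₁ = X₂ = Y₁ = Y₂ = [0,1]`, `μ = λ ⊗ δ₀` and
`ν = λ ⊗ λ`, both marginals are atomless, yet there is no bicausal coupling of `μ`
and `ν` concentrated on the graph of a bijection. -/
theorem no_bicausal_bijective_monge_coupling :
    ∀ μ ν : Measure (∀ _ : Fin 2, unitInterval),
      μ = ((volume : Measure unitInterval).prod
            (Measure.dirac (0 : unitInterval))).map
              (MeasurableEquiv.finTwoArrow (α := unitInterval)).symm →
      ν = ((volume : Measure unitInterval).prod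
            (volume : Measure unitInterval)).map
              (MeasurableEquiv.finTwoArrow (α := unitInterval)).symm →
      NoAtoms μ ∧ NoAtoms ν ∧
      ¬ ∃ π : Measure ((∀ _ : Fin 2, unitInterval) × (∀ _ : Fin 2, unitInterval)),
          π.map Prod.fst = μ ∧ π.map Prod.snd = ν ∧ IsBicausal π ∧
          ∃ T : (∀ _ : Fin 2, unitInterval) → (∀ _ : Fin 2, unitInterval),
            Measurable T ∧ Function.Bijective T ∧ π = μ.map (fun x => (x, T x)) := by
  intro μ ν hμ hν
  refine ⟨hμ ▸ noAtoms_aux _, hν ▸ noAtoms_aux _, ?_⟩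
  rintro ⟨π, hfst, hsnd, ⟨hc1, hc2⟩, T, hTm, hTbij, hπ⟩
  classical
  set e := MeasurableEquiv.finTwoArrow (α := unitInterval) with he
  have hsymm0 : ∀ p : unitInterval × unitInterval, (e.symm p) 0 = p.1 := fun p => rfl
  have hsymm1 : ∀ p : unitInterval × unitInterval, (e.symm p) 1 = p.2 := fun p => rfl
  have he0 : ∀ x : (∀ _ : Fin 2, unitInterval), e x = (x 0, x 1) := fun x => rfl
  -- probability measures
  have hμprob : IsProbabilityMeasure μ := hμ ▸ Measure.isProbabilityMeasure_map
    (MeasurableEquiv.finTwoArrow (α := unitInterval)).symm.measurable.aemeasurable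
  have hνprob : IsProbabilityMeasure ν := hν ▸ Measure.isProbabilityMeasure_map
    (MeasurableEquiv.finTwoArrow (α := unitInterval)).symm.measurable.aemeasurable
  -- a.e., the second coordinate under μ vanishes
  have hμ1 : ∀ᵐ x ∂μ, x 1 = 0 := by
    rw [ae_iff, hμ, MeasurableEquiv.map_apply]
    have hset : (MeasurableEquiv.finTwoArrow (α := unitInterval)).symm ⁻¹'
        {x | ¬ x 1 = 0} = Set.univ ×ˢ ({(0 : unitInterval)}ᶜ) := by
      ext p
      simp only [Set.mem_preimage, Set.mem_setOf_eq, Set.mem_prod, Set.mem_univ, true_and,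
        Set.mem_compl_iff, Set.mem_singleton_iff]
      exact Iff.rfl
    rw [hset, Measure.prod_prod, Measure.dirac_apply' _ (measurableSet_singleton _).compl]
    simp
  -- the inverse of T
  set S := Function.invFun T with hSdef
  have hST : ∀ x, S (T x) = x := fun x => Function.leftInverse_invFun hTbij.injective x
  have hTS : ∀ y, T (S y) = y := fun y => Function.rightInverse_invFun hTbij.surjective y
  have hSm : Measurable S := by
    intro C hC
    have himg : S ⁻¹' C = T '' C := by
      ext y
      constructor
      · intro hy; exact ⟨S y, hy, hTS y⟩
      · rintro ⟨x, hx, rfl⟩; rw [Set.mem_preimage, hST x]; exact hx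
    rw [himg]
    exact (hTm.measurableEmbedding hTbij.injective).measurableSet_image' hC
  have hgraphT : Measurable (fun x : (∀ _ : Fin 2, unitInterval) => (x, T x)) :=
    measurable_id.prodMk hTm
  have hgraphS : Measurable (fun y : (∀ _ : Fin 2, unitInterval) => (y, S y)) :=
    measurable_id.prodMk hSm
  -- f a = T (a, 0)
  set f : unitInterval → (∀ _ : Fin 2, unitInterval) :=
    fun a => T (e.symm (a, 0)) with hfdef
  have hfm : Measurable f :=
    hTm.comp (e.symm.measurable.comp (measurable_id.prodMk measurable_const))
  have hxf : ∀ᵐ x ∂μ, T x = f (x 0) := by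
    filter_upwards [hμ1] with x hx
    have hx' : e x = (x 0, 0) := by rw [he0 x, hx]
    have : e.symm (x 0, (0 : unitInterval)) = x := by
      rw [← hx', MeasurableEquiv.symm_apply_apply]
    show T x = T (e.symm (x 0, 0))
    rw [this]
  -- ν = μ.map T
  have hTν : μ.map T = ν := by
    rw [← hsnd, hπ, Measure.map_map measurable_snd hgraphT]
    rfl
  -- first coordinate of μ is uniform
  have hν0 : μ.map (fun x => x 0) = (volume : Measure unitInterval) := by
    rw [hμ, Measure.map_map (measurable_pi_apply 0)
      (MeasurableEquiv.finTwoArrow (α := unitInterval)).symm.measurable]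
    have hcomp : ((fun x : ∀ _ : Fin 2, unitInterval => x 0) ∘
        (MeasurableEquiv.finTwoArrow (α := unitInterval)).symm) = Prod.fst := rfl
    rw [hcomp, ← Measure.fst, Measure.fst_prod]
  -- the backward causality kernel
  obtain ⟨κ, hκM, hκeq, hκmeas⟩ := hc2
  haveI := hκM
  have hswfst : (π.map Prod.swap).map Prod.fst = ν := by
    rw [Measure.map_map measurable_fst measurable_swap]
    exact hsnd
  rw [hswfst] at hκeq
  have hρ : π.map Prod.swap = ν.map (fun y => (y, S y)) := by
    rw [hπ, Measure.map_map measurable_swap hgraphT]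
    have h1 : (Prod.swap ∘ fun x : (∀ _ : Fin 2, unitInterval) => (x, T x)) =
        fun x => (T x, x) := rfl
    rw [h1, ← hTν, Measure.map_map hgraphS hTm]
    exact Measure.map_congr (Filter.Eventually.of_forall fun x => by
      simp only [Function.comp_apply, hST x])
  -- the target sets
  set B₀ : Set unitInterval := Subtype.val ⁻¹' Set.Iic (1/2 : ℝ) with hB₀def
  have hB₀ : MeasurableSet B₀ := measurable_subtype_coe measurableSet_Iic
  set A : Set unitInterval := f ⁻¹' ((fun p => p 1) ⁻¹' B₀) with hAdef
  have hA : MeasurableSet A := hfm ((measurable_pi_apply 1) hB₀)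
  set B : Set (∀ _ : Fin 2, unitInterval) := (fun x => x 0) ⁻¹' A with hBdef
  have hB : MeasurableSet B := (measurable_pi_apply 0) hA
  have hBfilt : MeasurableSet[pathFiltration (fun _ : Fin 2 => unitInterval) 1] B := by
    rw [pathFiltration_one_eq]
    exact ⟨A, hA, rfl⟩
  have hGc : Measurable[MeasurableSpace.comap
      (fun y : (∀ _ : Fin 2, unitInterval) => y 0) inferInstance] (fun y => κ y B) := by
    rw [← pathFiltration_one_eq]
    exact hκmeas 1 one_lt_two B hBfilt
  -- the factor function g
  set g : unitInterval → ENNReal := fun a => κ (e.symm (a, 0)) B with hgdef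
  have hgy : ∀ y, κ y B = g (y 0) := by
    intro y
    exact comap_const_on hGc (by rw [hsymm0])
  have hgm : Measurable g := by
    intro C hC
    obtain ⟨D, hD, hDeq⟩ := hGc hC
    have hgC : g ⁻¹' C = D := by
      ext a
      have h1 := Set.ext_iff.1 hDeq (e.symm (a, 0))
      simp only [Set.mem_preimage, hsymm0] at h1
      exact h1.symm
    rw [hgC]
    exact hD
  -- a.e. identification of κ with the dirac at S y
  have hκae : (fun y => κ y B) =ᵐ[ν]
      (fun y => Set.indicator (S ⁻¹' B) (fun _ => (1 : ENNReal)) y) := by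
    refine ae_eq_of_forall_setLIntegral_eq_of_sigmaFinite (Kernel.measurable_coe κ hB)
      (measurable_const.indicator (hSm hB)) ?_
    intro s hs _
    have hL : ∫⁻ y in s, κ y B ∂ν = ν (s ∩ S ⁻¹' B) := by
      rw [← Measure.compProd_apply_prod hs hB, ← hκeq, hρ,
        Measure.map_apply hgraphS (hs.prod hB)]
      have hset : ((fun y : (∀ _ : Fin 2, unitInterval) => (y, S y)) ⁻¹' (s ×ˢ B))
          = s ∩ S ⁻¹' B := by
        ext y
        simp [Set.mem_prod]
      rw [hset]
    rw [hL, lintegral_indicator (hSm hB), setLIntegral_one, Measure.restrict_apply (hSm hB),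
      Set.inter_comm]
  -- a.e., f ((S y) 0) = y
  have hSy : ∀ᵐ y ∂ν, f (S y 0) = y := by
    have hm1 : Measurable (fun y : (∀ _ : Fin 2, unitInterval) => f (S y 0)) :=
      hfm.comp ((measurable_pi_apply 0).comp hSm)
    have hmeasset : MeasurableSet {y : (∀ _ : Fin 2, unitInterval) | f (S y 0) = y} :=
      StronglyMeasurable.measurableSet_eq_fun hm1.stronglyMeasurable
        measurable_id.stronglyMeasurable
    rw [← hTν, ae_map_iff hTm.aemeasurable hmeasset]
    filter_upwards [hxf] with x hx
    show f (S (T x) 0) = T x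
    rw [hST x]
    exact hx.symm
  -- a.e., g (y 0) = indicator of {y 1 ∈ B₀}
  have h1 : ∀ᵐ y ∂ν, g (y 0) = if y 1 ∈ B₀ then (1 : ENNReal) else 0 := by
    filter_upwards [hκae, hSy] with y hy1 hy2
    rw [← hgy y, hy1, Set.indicator_apply]
    have hmem : (y ∈ S ⁻¹' B) ↔ (y 1 ∈ B₀) := by
      show (S y ∈ B) ↔ _
      rw [hBdef]
      show (S y 0 ∈ A) ↔ _
      rw [hAdef]
      show (f (S y 0) 1 ∈ B₀) ↔ _
      rw [hy2]
    simp [hmem]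
  -- produce the two null sets
  have n1 : ν {y | g (y 0) = 1 ∧ y 1 ∉ B₀} = 0 := by
    refine measure_mono_null (fun y hy => ?_) (ae_iff.mp h1)
    simp only [Set.mem_setOf_eq] at hy ⊢
    intro hQ
    have h' := hy.1
    rw [hQ, if_neg hy.2] at h'
    exact (by norm_num : (0:ENNReal) ≠ 1) h'
  have n2 : ν {y | ¬ g (y 0) = 1 ∧ y 1 ∈ B₀} = 0 := by
    refine measure_mono_null (fun y hy => ?_) (ae_iff.mp h1)
    simp only [Set.mem_setOf_eq] at hy ⊢
    intro hQ
    rw [hQ, if_pos hy.2] at hy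
    exact hy.1 rfl
  -- push to the product space
  set N₁ : Set (unitInterval × unitInterval) :=
    ((fun p : unitInterval × unitInterval => g p.1) ⁻¹' {1}) ∩ (Prod.snd ⁻¹' B₀ᶜ) with hN₁def
  set N₂ : Set (unitInterval × unitInterval) :=
    ((fun p : unitInterval × unitInterval => g p.1) ⁻¹' {1}ᶜ) ∩ (Prod.snd ⁻¹' B₀) with hN₂def
  have hN₁m : MeasurableSet N₁ :=
    ((hgm.comp measurable_fst) (measurableSet_singleton 1)).inter (measurable_snd hB₀.compl)
  have hN₂m : MeasurableSet N₂ :=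
    ((hgm.comp measurable_fst) (measurableSet_singleton 1).compl).inter (measurable_snd hB₀)
  have m1 : ((volume : Measure unitInterval).prod (volume : Measure unitInterval)) N₁ = 0 := by
    have h := n1
    rw [hν, MeasurableEquiv.map_apply] at h
    have hseteq : (MeasurableEquiv.finTwoArrow (α := unitInterval)).symm ⁻¹'
        {y | g (y 0) = 1 ∧ y 1 ∉ B₀} = N₁ := by
      ext p
      simp only [Set.mem_preimage, Set.mem_setOf_eq, hN₁def, Set.mem_inter_iff,
        Set.mem_singleton_iff, Set.mem_compl_iff]
      exact Iff.rfl
    rwa [hseteq] at h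
  have m2 : ((volume : Measure unitInterval).prod (volume : Measure unitInterval)) N₂ = 0 := by
    have h := n2
    rw [hν, MeasurableEquiv.map_apply] at h
    have hseteq : (MeasurableEquiv.finTwoArrow (α := unitInterval)).symm ⁻¹'
        {y | ¬ g (y 0) = 1 ∧ y 1 ∈ B₀} = N₂ := by
      ext p
      simp only [Set.mem_preimage, Set.mem_setOf_eq, hN₂def, Set.mem_inter_iff,
        Set.mem_compl_iff, Set.mem_singleton_iff]
      exact Iff.rfl
    rwa [hseteq] at h
  rw [Measure.measure_prod_null hN₁m] at m1
  rw [Measure.measure_prod_null hN₂m] at m2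
  -- extract a point u
  haveI : Filter.NeBot (ae (volume : Measure unitInterval)) := by
    rw [ae_neBot]; exact IsProbabilityMeasure.ne_zero volume
  obtain ⟨u, hu1, hu2⟩ := (m1.and m2).exists
  simp only [Pi.zero_apply] at hu1 hu2
  -- volume computations for B₀
  have hvolB₀ : (volume : Measure unitInterval) B₀ = ENNReal.ofReal (1/2) := by
    rw [hB₀def, unitInterval.volume_def,
      (MeasurableEmbedding.subtype_coe measurableSet_Icc).comap_apply,
      Subtype.image_preimage_coe]
    have h : Set.Icc (0:ℝ) 1 ∩ Set.Iic (1/2) = Set.Icc 0 (1/2) := by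
      ext r
      simp only [Set.mem_inter_iff, Set.mem_Icc, Set.mem_Iic]
      constructor
      · rintro ⟨⟨h0, _⟩, h2⟩; exact ⟨h0, h2⟩
      · rintro ⟨h0, h2⟩; exact ⟨⟨h0, by linarith⟩, h2⟩
    rw [h, Real.volume_Icc]; norm_num
  have hvolB₀c : (volume : Measure unitInterval) B₀ᶜ = ENNReal.ofReal (1/2) := by
    rw [hB₀def, unitInterval.volume_def,
      (MeasurableEmbedding.subtype_coe measurableSet_Icc).comap_apply,
      ← Set.preimage_compl, Set.compl_Iic, Subtype.image_preimage_coe]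
    have h : Set.Icc (0:ℝ) 1 ∩ Set.Ioi (1/2) = Set.Ioc (1/2) 1 := by
      ext r
      simp only [Set.mem_inter_iff, Set.mem_Icc, Set.mem_Ioi, Set.mem_Ioc]
      constructor
      · rintro ⟨⟨_, hr1⟩, hr2⟩; exact ⟨hr2, hr1⟩
      · rintro ⟨hr0, hr2⟩; exact ⟨⟨by linarith, hr2⟩, hr0⟩
    rw [h, Real.volume_Ioc]; norm_num
  have hhalf : ENNReal.ofReal (1/2) ≠ 0 := by
    simp [ENNReal.ofReal_eq_zero]
  by_cases hgu : g u = 1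
  · -- then B₀ᶜ is null
    have hpre : Prod.mk u ⁻¹' N₁ = B₀ᶜ := by
      ext v
      simp only [hN₁def, Set.mem_preimage, Set.mem_inter_iff, Set.mem_singleton_iff,
        Set.mem_compl_iff]
      exact ⟨fun h => h.2, fun h => ⟨hgu, h⟩⟩
    rw [hpre, hvolB₀c] at hu1
    exact hhalf hu1
  · have hpre : Prod.mk u ⁻¹' N₂ = B₀ := by
      ext v
      simp only [hN₂def, Set.mem_preimage, Set.mem_inter_iff, Set.mem_compl_iff,
        Set.mem_singleton_iff]
      exact ⟨fun h => h.2, fun h => ⟨hgu, h⟩⟩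
    rw [hpre, hvolB₀] at hu2
    exact hhalf hu2
end

section
/- Let μ ∈ P(ℝ^N) be absolutely continuous with respect to Lebesgue measure. Then μ admits a disintegration μ(dx) = μ₁(dx₁) μ^{x₁}(dx₂) ⋯ μ^{x_{1:N−1}}(dx_N) such that μ₁ and every conditional measure μ^{x_{1:t}} (for all t < N and all x_{1:t} ∈ ℝ^t) is an atomless probability measure on ℝ. -/
open MeasureTheory ProbabilityTheory

variable {N : ℕ}

/-- Restriction of a path to its first `t` coordinates. -/
def restrictPath {N : ℕ} {X : Fin N → Type*} (t : ℕ) (x : ∀ i, X i) :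
    ∀ i : {i : Fin N // (i : ℕ) < t}, X i := fun i => x i

/-- `μ` admits successive disintegrations whose conditional laws (of each coordinate
given the strictly preceding ones) are all atomless probability measures —
Assumption 3.1 of the paper. -/
def HasAtomlessDisintegrations {N : ℕ} {X : Fin N → Type*} [∀ i, MeasurableSpace (X i)]
    (μ : Measure (∀ i, X i)) : Prop :=
  ∀ t : Fin N, ∃ κ : ProbabilityTheory.Kernel (∀ i : {i : Fin N // (i : ℕ) < (t : ℕ)}, X i) (X t),
    ProbabilityTheory.IsMarkovKernel κ ∧
    μ.map (fun x => (restrictPath (t : ℕ) x, x t))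
      = (μ.map (restrictPath (t : ℕ) (X := X))).compProd κ ∧
    ∀ h, ∀ a : X t, κ h {a} = 0

/-!
Project `μ` onto the pair (first `t` coordinates, `t`-th coordinate). The projection of
Lebesgue measure is absolutely continuous with respect to the product of Lebesgue measures,
so the law `ρ` of the pair is too. Absolute continuity of `ρ = ρ₁ ⊗ κ` with respect to a
product forces `κ a ≪ Lebesgue` for `ρ₁`-a.e. `a`, hence `κ a` is atomless for a.e. `a`;
redefining `κ` on a measurable `ρ₁`-null set as a fixed atomless law (a Gaussian) does not
change `ρ₁ ⊗ κ` and makes every conditional law atomless.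
-/

section

variable {X : Fin N → Type*} [∀ i, MeasurableSpace (X i)]

lemma measurable_restrictPath (t : ℕ) : Measurable (restrictPath t (X := X)) :=
  measurable_pi_lambda _ fun i => measurable_pi_apply (i : Fin N)

lemma quasiMeasurePreserving_restrictPath_prodMk_eval (μ : ∀ i, Measure (X i))
    [∀ i, SigmaFinite (μ i)] (t : Fin N) :
    Measure.QuasiMeasurePreserving (fun x => (restrictPath (t : ℕ) x, x t)) (Measure.pi μ)
      ((Measure.pi fun i : {i : Fin N // (i : ℕ) < t} => μ i).prod (μ t)) := by
  classical
  let tc : {i : Fin N // ¬ (i : ℕ) < t} := ⟨t, lt_irrefl _⟩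
  exact (QuasiMeasurePreserving.prodMap (.id _) (Measure.quasiMeasurePreserving_eval _ tc)).comp
    (measurePreserving_piEquivPiSubtypeProd μ fun i : Fin N => (i : ℕ) < t).quasiMeasurePreserving

end

lemma Measure.ae_condKernel_absolutelyContinuous {α Ω : Type*} [MeasurableSpace α]
    [MeasurableSpace Ω] [StandardBorelSpace Ω] [Nonempty Ω] {ρ : Measure (α × Ω)}
    [IsFiniteMeasure ρ] {μ : Measure α} [SigmaFinite μ] {ν : Measure Ω} [SFinite ν]
    (h : ρ ≪ μ.prod ν) : ∀ᵐ a ∂ρ.fst, ρ.condKernel a ≪ ν := by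
  -- `ν` is replaced by an equivalent finite measure since the kernel comparison needs
  -- finite kernels.
  have h' : ρ.fst ⊗ₘ ρ.condKernel ≪ μ ⊗ₘ Kernel.const α ν.toFinite := by
    rw [Measure.compProd_const, ρ.disintegrate ρ.condKernel]
    exact h.trans (Measure.AbsolutelyContinuous.rfl.prod (absolutelyContinuous_toFinite ν))
  filter_upwards [(Measure.absolutelyContinuous_compProd_of_compProd h').kernel_of_compProd]
    with a ha
  exact ha.trans (toFinite_absolutelyContinuous ν)

lemma Kernel.exists_isMarkovKernel_ae_eq_forall {α β : Type*} [MeasurableSpace α]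
    [MeasurableSpace β] {κ : Kernel α β} [IsMarkovKernel κ] {μ : Measure α}
    {P : Measure β → Prop} (hκ : ∀ᵐ a ∂μ, P (κ a)) {ν : Measure β} [IsProbabilityMeasure ν]
    (hν : P ν) : ∃ η : Kernel α β, IsMarkovKernel η ∧ η =ᵐ[μ] κ ∧ ∀ a, P (η a) := by
  classical
  set s := toMeasurable μ {a | ¬ P (κ a)}
  have hs : MeasurableSet s := measurableSet_toMeasurable _ _
  have hs_null : μ s = 0 := by rw [measure_toMeasurable]; exact ae_iff.mp hκ
  refine ⟨Kernel.piecewise hs (Kernel.const α ν) κ, inferInstance, ?_, fun a => ?_⟩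
  · filter_upwards [measure_eq_zero_iff_ae_notMem.mp hs_null] with a ha
    rw [Kernel.piecewise_apply, if_neg ha]
  · rw [Kernel.piecewise_apply]
    split_ifs with ha
    · rwa [Kernel.const_apply]
    · by_contra hP
      exact ha (subset_toMeasurable _ _ hP)

/-- Every probability measure on `ℝ^N` that is absolutely continuous
with respect to Lebesgue measure admits a successive disintegration all of whose
conditional measures (of each coordinate given the preceding ones) are atomless
probability measures on `ℝ`. -/
theorem hasAtomlessDisintegrations_of_absolutelyContinuous
    {N : ℕ} (μ : Measure (Fin N → ℝ)) [IsProbabilityMeasure μ]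
    (hac : μ ≪ (volume : Measure (Fin N → ℝ))) :
    HasAtomlessDisintegrations (X := fun _ : Fin N => ℝ) μ := by
  intro t
  have hpair : Measurable fun x : Fin N → ℝ => (restrictPath (t : ℕ) x, x t) :=
    (measurable_restrictPath _).prodMk (measurable_pi_apply t)
  set ρ := μ.map fun x => (restrictPath (t : ℕ) x, x t)
  have hρ : ρ ≪ volume.prod volume := (hac.map hpair).trans
    (quasiMeasurePreserving_restrictPath_prodMk_eval (fun _ => (volume : Measure ℝ)) t
      |>.absolutelyContinuous)
  have hatomless : ∀ᵐ a ∂ρ.fst, ∀ x, ρ.condKernel a {x} = 0 :=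
    (Measure.ae_condKernel_absolutelyContinuous hρ).mono fun a ha x => ha (measure_singleton x)
  obtain ⟨κ, hκ, hκ_ae, hκ_atomless⟩ := Kernel.exists_isMarkovKernel_ae_eq_forall hatomless
    (P := fun m => ∀ x, m {x} = 0) (ν := gaussianReal 0 1)
    (nullSingletonClass_gaussianReal one_ne_zero).measure_singleton
  refine ⟨κ, hκ, ?_, hκ_atomless⟩
  rw [← Measure.fst_map_prodMk (measurable_pi_apply t), Measure.compProd_congr hκ_ae,
    ρ.disintegrate ρ.condKernel]
end
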